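/- arXiv:2010.15685 — 7 statements merged into one kernel-verified Lean document; each statement's English description precedes it below -/
import Mathlib

section
/- Let α ∈ (0,1), Λ > 0 and v₀ ∈ (0,1). Then there exist a speed c > 0, a free boundary 0 < R < ∞, and a function v : ℝ → ℝ that is continuously differentiable on [0,R] and twice differentiable on [0,R), such that Λ·v''(ξ) − c·v'(ξ) = v(ξ)^α for all ξ ∈ (0,R), v(0) = v₀, v'(0) = −(c/Λ)·(1−v₀), v(R) = 0, v'(R) = 0, and moreover v(ξ) > 0, v'(ξ) < 0 and v''(ξ) > 0 for all ξ ∈ [0,R). -/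
/-!
The substitution `v ξ = ψ (S - k ξ) / A` with `c = Λ k` and `Λ k² = A ^ (1 - α)` turns
`Λ v'' - c v' = v ^ α` into `ψ'' + ψ' = ψ ^ α`, and the free boundary `ξ = S / k` into `s = 0`,
where we ask `ψ = ψ' = 0`. This initial value problem is solved by `ψ ≡ 0`, but since `t ↦ t ^ α`
is not Lipschitz at `0` it also has a solution with `ψ > 0` for `s > 0`: iterate the
variation-of-constants operator from the subsolution `ε s ^ (2 / (1 - α))`, below the supersolution
`s ^ (1 / (1 - α))`, and pass to the limit by dominated convergence. Along this solution `ψ' / ψ` is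
unbounded near `0` (by Grönwall, because `ψ 0 = 0` but `ψ ≢ 0`) and takes small values (otherwise
`ψ` would outgrow the supersolution exponentially), so it equals `(1 - v₀) / v₀` at some `S`; then
`A = ψ S / v₀` gives both conditions at `ξ = 0`, and `v'' > 0` because `ψ'' = ψ ^ α - ψ' > 0`.
-/

open Real Set MeasureTheory Filter

noncomputable section

/-- A solution of the scalar one-phase free boundary problem
`Λ v'' − c v' = v^α` on `(0,R)` with `v(0) = v₀`, `v'(0) = −(c/Λ)(1−v₀)`,
`v(R) = v'(R) = 0`, where `v > 0` and `v' < 0` on `[0,R)`. -/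
def IsFBPSolution (α Λ v₀ c R : ℝ) (v : ℝ → ℝ) : Prop :=
  0 < c ∧ 0 < R ∧
  ContDiffOn ℝ 1 v (Set.Icc 0 R) ∧
  (∀ ξ ∈ Set.Ico 0 R, DifferentiableAt ℝ (deriv v) ξ) ∧
  (∀ ξ ∈ Set.Ioo 0 R, Λ * deriv (deriv v) ξ - c * deriv v ξ = v ξ ^ α) ∧
  v 0 = v₀ ∧ deriv v 0 = -(c / Λ) * (1 - v₀) ∧
  v R = 0 ∧ deriv v R = 0 ∧
  (∀ ξ ∈ Set.Ico 0 R, 0 < v ξ) ∧ (∀ ξ ∈ Set.Ico 0 R, deriv v ξ < 0)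

open Topology intervalIntegral

namespace FBP

lemma integral_eq_zero_of_nonpos {g : ℝ → ℝ} (hg : ∀ t ≤ 0, g t = 0) {s : ℝ} (hs : s ≤ 0) :
    ∫ t in (0:ℝ)..s, g t = 0 := by
  rw [integral_congr (g := fun _ => 0) fun t ht => hg t ?_, intervalIntegral.integral_zero]
  rw [uIcc_of_ge hs] at ht
  exact ht.2

lemma tendsto_intervalIntegral_of_nonneg_of_le {F : ℕ → ℝ → ℝ} {f : ℝ → ℝ} {a b : ℝ}
    (hF : ∀ n, IntervalIntegrable (F n) volume a b) (hf : IntervalIntegrable f volume a b)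
    (hF0 : ∀ n x, 0 ≤ F n x) (hFf : ∀ n x, F n x ≤ f x)
    (hlim : ∀ x, Tendsto (fun n => F n x) atTop (𝓝 (f x))) :
    Tendsto (fun n => ∫ x in a..b, F n x) atTop (𝓝 (∫ x in a..b, f x)) :=
  tendsto_integral_filter_of_dominated_convergence f
    (Eventually.of_forall fun n => (hF n).def'.aestronglyMeasurable)
    (Eventually.of_forall fun n => Eventually.of_forall fun x _ => by
      rw [norm_of_nonneg (hF0 n x)]; exact hFf n x)
    hf (Eventually.of_forall fun x _ => hlim x)

lemma continuous_of_hasDerivAt {φ φ' : ℝ → ℝ} (hφ : ∀ s, HasDerivAt φ (φ' s) s) : Continuous φ :=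
  continuous_iff_continuousAt.2 fun s => (hφ s).continuousAt

def supersolution (α s : ℝ) : ℝ := max s 0 ^ (1 - α)⁻¹

structure Admissible (α : ℝ) (f : ℝ → ℝ) : Prop where
  monotone : Monotone f
  nonneg : ∀ s, 0 ≤ f s
  le_supersolution : ∀ s, f s ≤ supersolution α s

def derivOp (α : ℝ) (f : ℝ → ℝ) (s : ℝ) : ℝ := exp (-s) * ∫ t in (0:ℝ)..s, exp t * f t ^ α

/-- Variation of constants for `ψ'' + ψ' = ψ ^ α`, `ψ 0 = ψ' 0 = 0`: a fixed point of `op α`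
solves this problem, with `ψ' = derivOp α ψ`. -/
def op (α : ℝ) (f : ℝ → ℝ) (s : ℝ) : ℝ := ∫ u in (0:ℝ)..s, derivOp α f u

variable {α : ℝ} {f g : ℝ → ℝ}

lemma supersolution_nonneg (s : ℝ) : 0 ≤ supersolution α s := rpow_nonneg (le_max_right _ _) _

lemma supersolution_of_nonpos (hα : α < 1) {s : ℝ} (hs : s ≤ 0) : supersolution α s = 0 := by
  rw [supersolution, max_eq_right hs, zero_rpow (inv_ne_zero (sub_ne_zero.2 hα.ne'))]

lemma mul_rpow_inv_one_sub_rpow (hα : α < 1) {s : ℝ} (hs : 0 ≤ s) :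
    s * (s ^ (1 - α)⁻¹) ^ α = s ^ (1 - α)⁻¹ := by
  have hq : 1 + (1 - α)⁻¹ * α = (1 - α)⁻¹ := by
    field_simp [(sub_pos.2 hα).ne']
    ring
  rw [← rpow_mul hs]
  nth_rw 1 [← rpow_one s]
  rw [← rpow_add' hs (by rw [hq]; exact (inv_pos.2 (sub_pos.2 hα)).ne'), hq]

namespace Admissible

lemma eq_zero (hα : α < 1) (hf : Admissible α f) {s : ℝ} (hs : s ≤ 0) : f s = 0 :=
  le_antisymm ((hf.le_supersolution s).trans_eq (supersolution_of_nonpos hα hs)) (hf.nonneg s)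

lemma monotone_rpow (hα : 0 ≤ α) (hf : Admissible α f) : Monotone fun t => f t ^ α :=
  fun _ _ h => rpow_le_rpow (hf.nonneg _) (hf.monotone h) hα

lemma monotone_integrand (hα : 0 ≤ α) (hf : Admissible α f) :
    Monotone fun t => exp t * f t ^ α :=
  Monotone.mul exp_monotone (hf.monotone_rpow hα)
    (fun _ => (exp_pos _).le) (fun _ => rpow_nonneg (hf.nonneg _) _)

lemma intervalIntegrable_integrand (hα : 0 ≤ α) (hf : Admissible α f) (a b : ℝ) :
    IntervalIntegrable (fun t => exp t * f t ^ α) volume a b :=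
  (hf.monotone_integrand hα).intervalIntegrable

lemma continuous_derivOp (hα : 0 ≤ α) (hf : Admissible α f) : Continuous (derivOp α f) :=
  (continuous_exp.comp continuous_neg).mul
    (continuous_primitive (hf.intervalIntegrable_integrand hα) 0)

lemma hasDerivAt_op (hα : 0 ≤ α) (hf : Admissible α f) (s : ℝ) :
    HasDerivAt (op α f) (derivOp α f s) s :=
  ((hf.continuous_derivOp hα).integral_hasStrictDerivAt 0 s).hasDerivAt

lemma derivOp_eq_zero (hα : α ∈ Ioo 0 1) (hf : Admissible α f) {s : ℝ} (hs : s ≤ 0) :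
    derivOp α f s = 0 := by
  rw [derivOp, integral_eq_zero_of_nonpos (fun t ht => by
    rw [hf.eq_zero hα.2 ht, zero_rpow hα.1.ne', mul_zero]) hs, mul_zero]

lemma op_eq_zero (hα : α ∈ Ioo 0 1) (hf : Admissible α f) {s : ℝ} (hs : s ≤ 0) :
    op α f s = 0 :=
  integral_eq_zero_of_nonpos (fun _ ht => hf.derivOp_eq_zero hα ht) hs

lemma derivOp_nonneg (hα : α ∈ Ioo 0 1) (hf : Admissible α f) (s : ℝ) : 0 ≤ derivOp α f s := by
  rcases le_total s 0 with hs | hs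
  · exact (hf.derivOp_eq_zero hα hs).ge
  · exact mul_nonneg (exp_pos _).le (integral_nonneg hs fun t _ =>
      mul_nonneg (exp_pos _).le (rpow_nonneg (hf.nonneg t) _))

lemma derivOp_le (hα : 0 ≤ α) (hf : Admissible α f) {s : ℝ} (hs : 0 ≤ s) :
    derivOp α f s ≤ (1 - exp (-s)) * f s ^ α := by
  have hint : ∫ t in (0:ℝ)..s, exp t * f t ^ α ≤ ∫ t in (0:ℝ)..s, exp t * f s ^ α :=
    integral_mono_on hs (hf.intervalIntegrable_integrand hα 0 s)
      ((continuous_exp.mul continuous_const).intervalIntegrable _ _) fun t ht =>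
        mul_le_mul_of_nonneg_left (rpow_le_rpow (hf.nonneg t) (hf.monotone ht.2) hα) (exp_pos t).le
  rw [intervalIntegral.integral_mul_const, integral_exp, exp_zero] at hint
  calc derivOp α f s ≤ exp (-s) * ((exp s - 1) * f s ^ α) :=
        mul_le_mul_of_nonneg_left hint (exp_pos _).le
    _ = (1 - exp (-s)) * f s ^ α := by
        rw [← mul_assoc, mul_sub, ← exp_add, neg_add_cancel, exp_zero, mul_one]

lemma derivOp_le_rpow (hα : α ∈ Ioo 0 1) (hf : Admissible α f) (s : ℝ) :
    derivOp α f s ≤ f s ^ α := by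
  rcases le_total s 0 with hs | hs
  · exact (hf.derivOp_eq_zero hα hs).trans_le (rpow_nonneg (hf.nonneg s) _)
  · refine (hf.derivOp_le hα.1.le hs).trans
      (mul_le_of_le_one_left (rpow_nonneg (hf.nonneg s) _) ?_)
    linarith [exp_pos (-s)]

lemma op_le (hα : α ∈ Ioo 0 1) (hf : Admissible α f) {s : ℝ} (hs : 0 ≤ s) :
    op α f s ≤ s * f s ^ α := by
  calc op α f s ≤ ∫ _ in (0:ℝ)..s, f s ^ α :=
        integral_mono_on hs ((hf.continuous_derivOp hα.1.le).intervalIntegrable 0 s)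
          intervalIntegrable_const fun u hu => (hf.derivOp_le_rpow hα u).trans
            (rpow_le_rpow (hf.nonneg u) (hf.monotone hu.2) hα.1.le)
    _ = s * f s ^ α := by rw [intervalIntegral.integral_const, sub_zero, smul_eq_mul]

protected lemma op (hα : α ∈ Ioo 0 1) (hf : Admissible α f) : Admissible α (op α f) := by
  have hmono : Monotone (op α f) :=
    monotone_of_hasDerivAt_nonneg (hf.hasDerivAt_op hα.1.le) (hf.derivOp_nonneg hα)
  refine ⟨hmono, fun s => ?_, fun s => ?_⟩
  · rcases le_total s 0 with hs | hs
    · exact (hf.op_eq_zero hα hs).ge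
    · exact (hf.op_eq_zero hα le_rfl).ge.trans (hmono hs)
  · rcases le_total s 0 with hs | hs
    · exact (hf.op_eq_zero hα hs).trans_le (supersolution_nonneg s)
    calc op α f s ≤ s * f s ^ α := hf.op_le hα hs
      _ ≤ s * (s ^ (1 - α)⁻¹) ^ α := by
          refine mul_le_mul_of_nonneg_left (rpow_le_rpow (hf.nonneg s) ?_ hα.1.le) hs
          simpa [supersolution, max_eq_left hs] using hf.le_supersolution s
      _ = supersolution α s := by
          rw [mul_rpow_inv_one_sub_rpow hα.2 hs, supersolution, max_eq_left hs]

end Admissible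

lemma derivOp_mono (hα : α ∈ Ioo 0 1) (hf : Admissible α f) (hg : Admissible α g) (hfg : f ≤ g)
    (s : ℝ) : derivOp α f s ≤ derivOp α g s := by
  rcases le_total s 0 with hs | hs
  · rw [hf.derivOp_eq_zero hα hs, hg.derivOp_eq_zero hα hs]
  · refine mul_le_mul_of_nonneg_left (integral_mono_on hs
      (hf.intervalIntegrable_integrand hα.1.le 0 s) (hg.intervalIntegrable_integrand hα.1.le 0 s)
      fun t _ => ?_) (exp_pos _).le
    exact mul_le_mul_of_nonneg_left (rpow_le_rpow (hf.nonneg t) (hfg t) hα.1.le) (exp_pos t).le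

lemma op_mono (hα : α ∈ Ioo 0 1) (hf : Admissible α f) (hg : Admissible α g) (hfg : f ≤ g) :
    op α f ≤ op α g := fun s => by
  rcases le_total s 0 with hs | hs
  · rw [hf.op_eq_zero hα hs, hg.op_eq_zero hα hs]
  · exact integral_mono_on hs ((hf.continuous_derivOp hα.1.le).intervalIntegrable 0 s)
      ((hg.continuous_derivOp hα.1.le).intervalIntegrable 0 s)
      fun u _ => derivOp_mono hα hf hg hfg u

lemma tendsto_op (hα : α ∈ Ioo 0 1) {F : ℕ → ℝ → ℝ} (hF : ∀ n, Admissible α (F n))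
    (hf : Admissible α f) (hFf : ∀ n, F n ≤ f)
    (hlim : ∀ s, Tendsto (fun n => F n s) atTop (𝓝 (f s))) (s : ℝ) :
    Tendsto (fun n => op α (F n) s) atTop (𝓝 (op α f s)) := by
  have hderiv (u : ℝ) : Tendsto (fun n => derivOp α (F n) u) atTop (𝓝 (derivOp α f u)) :=
    (tendsto_intervalIntegral_of_nonneg_of_le
      (fun n => (hF n).intervalIntegrable_integrand hα.1.le 0 u)
      (hf.intervalIntegrable_integrand hα.1.le 0 u)
      (fun n t => mul_nonneg (exp_pos t).le (rpow_nonneg ((hF n).nonneg t) α))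
      (fun n t => mul_le_mul_of_nonneg_left
        (rpow_le_rpow ((hF n).nonneg t) (hFf n t) hα.1.le) (exp_pos t).le)
      fun t => ((hlim t).rpow_const (Or.inr hα.1.le)).const_mul _).const_mul _
  exact tendsto_intervalIntegral_of_nonneg_of_le
    (fun n => ((hF n).continuous_derivOp hα.1.le).intervalIntegrable 0 s)
    ((hf.continuous_derivOp hα.1.le).intervalIntegrable 0 s) (fun n => (hF n).derivOp_nonneg hα)
    (fun n => derivOp_mono hα (hF n) hf (hFf n)) hderiv

theorem exists_op_eq_self (hα : α ∈ Ioo 0 1) (hf : Admissible α f) (hsub : f ≤ op α f) :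
    ∃ ψ, Admissible α ψ ∧ f ≤ ψ ∧ op α ψ = ψ := by
  set F : ℕ → ℝ → ℝ := fun n => (op α)^[n] f
  have hFsucc (n : ℕ) : F (n + 1) = op α (F n) := Function.iterate_succ_apply' _ _ _
  have hF (n : ℕ) : Admissible α (F n) := by
    induction n with
    | zero => exact hf
    | succ n ih => rw [hFsucc]; exact ih.op hα
  have hFmono (n : ℕ) : F n ≤ F (n + 1) := by
    induction n with
    | zero => exact hsub
    | succ n ih => rw [hFsucc, hFsucc]; exact op_mono hα (hF n) (hF (n + 1)) ih
  have hbdd (s : ℝ) : BddAbove (range fun n => F n s) :=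
    ⟨supersolution α s, by rintro _ ⟨n, rfl⟩; exact (hF n).le_supersolution s⟩
  set ψ : ℝ → ℝ := fun s => ⨆ n, F n s
  have hFψ (n : ℕ) : F n ≤ ψ := fun s => le_ciSup (hbdd s) n
  have hψ : Admissible α ψ :=
    ⟨fun x y hxy => ciSup_mono (hbdd y) fun n => (hF n).monotone hxy,
      fun s => (hf.nonneg s).trans (hFψ 0 s), fun s => ciSup_le fun n => (hF n).le_supersolution s⟩
  have hlim (s : ℝ) : Tendsto (fun n => F n s) atTop (𝓝 (ψ s)) :=
    tendsto_atTop_ciSup (monotone_nat_of_le_succ fun n => hFmono n s) (hbdd s)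
  refine ⟨ψ, hψ, hFψ 0, funext fun s =>
    tendsto_nhds_unique ?_ ((hlim s).comp (tendsto_add_atTop_nat 1))⟩
  simpa only [Function.comp_def, hFsucc] using tendsto_op hα hF hψ hFψ hlim s

def subsolution (α ε s : ℝ) : ℝ := ε * max 0 (min s 1) ^ (2 / (1 - α))

lemma subsolution_of_mem_Icc {ε s : ℝ} (hs : s ∈ Icc (0:ℝ) 1) :
    subsolution α ε s = ε * s ^ (2 / (1 - α)) := by
  rw [subsolution, min_eq_left hs.2, max_eq_right hs.1]

lemma subsolution_pos {ε s : ℝ} (hε : 0 < ε) (hs : 0 < s) : 0 < subsolution α ε s :=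
  mul_pos hε (rpow_pos_of_pos (lt_max_of_lt_right (lt_min hs one_pos)) _)

lemma admissible_subsolution (hα : α < 1) {ε : ℝ} (hε₀ : 0 ≤ ε) (hε₁ : ε ≤ 1) :
    Admissible α (subsolution α ε) := by
  have hq : 0 < (1 - α)⁻¹ := inv_pos.2 (sub_pos.2 hα)
  have hqp : (1 - α)⁻¹ ≤ 2 / (1 - α) := by
    rw [div_eq_mul_inv]; linarith
  refine ⟨fun x y hxy => ?_, fun s => mul_nonneg hε₀ (rpow_nonneg (le_max_left _ _) _),
    fun s => ?_⟩
  · exact mul_le_mul_of_nonneg_left (rpow_le_rpow (le_max_left _ _)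
      (max_le_max le_rfl (min_le_min_right 1 hxy)) (by linarith)) hε₀
  · set m := max 0 (min s 1)
    have hm₀ : 0 ≤ m := le_max_left _ _
    calc subsolution α ε s ≤ 1 * m ^ (2 / (1 - α)) :=
          mul_le_mul_of_nonneg_right hε₁ (rpow_nonneg hm₀ _)
      _ ≤ m ^ (1 - α)⁻¹ := by
          rw [one_mul]
          exact rpow_le_rpow_of_exponent_ge' hm₀ (max_le zero_le_one (min_le_right _ _)) hq.le hqp
      _ ≤ supersolution α s :=
          rpow_le_rpow hm₀ (max_comm s 0 ▸ max_le_max le_rfl (min_le_left _ _)) hq.le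

lemma exp_neg_mul_integral_rpow_le_derivOp (hα : 0 ≤ α) (hf : Admissible α f) {u : ℝ}
    (hu : 0 ≤ u) : exp (-u) * ∫ t in (0:ℝ)..u, f t ^ α ≤ derivOp α f u := by
  refine mul_le_mul_of_nonneg_left (integral_mono_on hu ?_
    (hf.intervalIntegrable_integrand hα 0 u) fun t ht => ?_) (exp_pos _).le
  · exact (hf.monotone_rpow hα).intervalIntegrable
  · exact le_mul_of_one_le_left (rpow_nonneg (hf.nonneg t) _) (one_le_exp ht.1)

lemma two_lt_two_div_one_sub (hα : α ∈ Ioo 0 1) : 2 < 2 / (1 - α) := by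
  rw [lt_div_iff₀ (sub_pos.2 hα.2)]
  linarith [hα.1]

lemma two_div_one_sub_mul_self (hα : α < 1) : 2 / (1 - α) * α = 2 / (1 - α) - 2 := by
  field_simp [(sub_pos.2 hα).ne']
  ring

lemma derivOp_subsolution_ge (hα : α ∈ Ioo 0 1) {ε u : ℝ} (hε₀ : 0 ≤ ε) (hε₁ : ε ≤ 1)
    (hu : u ∈ Icc (0:ℝ) 1) :
    exp (-1) * ε ^ α / (2 / (1 - α) - 1) * u ^ (2 / (1 - α) - 1)
      ≤ derivOp α (subsolution α ε) u := by
  set p := 2 / (1 - α)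
  have hp : 2 < p := two_lt_two_div_one_sub hα
  have hpow : EqOn (fun t => subsolution α ε t ^ α) (fun t => ε ^ α * t ^ (p - 2)) (uIcc 0 u) := by
    intro t ht
    rw [uIcc_of_le hu.1] at ht
    simp only
    rw [subsolution_of_mem_Icc ⟨ht.1, ht.2.trans hu.2⟩, mul_rpow hε₀ (rpow_nonneg ht.1 _),
      ← rpow_mul ht.1, two_div_one_sub_mul_self hα.2]
  have hint : ∫ t in (0:ℝ)..u, subsolution α ε t ^ α = ε ^ α / (p - 1) * u ^ (p - 1) := by
    rw [integral_congr hpow, intervalIntegral.integral_const_mul,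
      integral_rpow (Or.inl (by linarith)), show p - 2 + 1 = p - 1 by ring,
      zero_rpow (by linarith), sub_zero]
    ring
  calc exp (-1) * ε ^ α / (p - 1) * u ^ (p - 1)
      = exp (-1) * (ε ^ α / (p - 1) * u ^ (p - 1)) := by ring
    _ ≤ exp (-u) * ∫ t in (0:ℝ)..u, subsolution α ε t ^ α := by
        rw [hint]
        exact mul_le_mul_of_nonneg_right (exp_le_exp.2 (neg_le_neg hu.2)) (mul_nonneg
          (div_nonneg (rpow_nonneg hε₀ _) (by linarith)) (rpow_nonneg hu.1 _))
    _ ≤ derivOp α (subsolution α ε) u :=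
        exp_neg_mul_integral_rpow_le_derivOp hα.1.le (admissible_subsolution hα.2 hε₀ hε₁) hu.1

lemma subsolution_le_op (hα : α ∈ Ioo 0 1) {ε : ℝ} (hε₀ : 0 ≤ ε) (hε₁ : ε ≤ 1)
    (hε : ε ≤ exp (-1) * ε ^ α / (2 / (1 - α) * (2 / (1 - α) - 1))) :
    subsolution α ε ≤ op α (subsolution α ε) := by
  set p := 2 / (1 - α)
  have hp : 2 < p := two_lt_two_div_one_sub hα
  have hf := admissible_subsolution hα.2 hε₀ hε₁
  have key (s : ℝ) (hs : s ∈ Icc (0:ℝ) 1) : subsolution α ε s ≤ op α (subsolution α ε) s :=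
    calc subsolution α ε s = ε * s ^ p := subsolution_of_mem_Icc hs
      _ ≤ exp (-1) * ε ^ α / (p * (p - 1)) * s ^ p :=
          mul_le_mul_of_nonneg_right hε (rpow_nonneg hs.1 _)
      _ = ∫ u in (0:ℝ)..s, exp (-1) * ε ^ α / (p - 1) * u ^ (p - 1) := by
          rw [intervalIntegral.integral_const_mul, integral_rpow (Or.inl (by linarith)),
            sub_add_cancel, zero_rpow (by linarith), sub_zero]
          field_simp
      _ ≤ op α (subsolution α ε) s :=
          integral_mono_on hs.1 (((continuous_id.rpow_const fun _ => Or.inr (by linarith)).const_mul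
            _).intervalIntegrable _ _) ((hf.continuous_derivOp hα.1.le).intervalIntegrable _ _)
            fun u hu => derivOp_subsolution_ge hα hε₀ hε₁ ⟨hu.1, hu.2.trans hs.2⟩
  intro s
  rcases le_total s 0 with hs | hs
  · rw [hf.eq_zero hα.2 hs]
    exact (hf.op hα).nonneg s
  rcases le_total s 1 with hs₁ | hs₁
  · exact key s ⟨hs, hs₁⟩
  · calc subsolution α ε s = subsolution α ε 1 := by
          simp only [subsolution, min_eq_right hs₁, min_self]
      _ ≤ op α (subsolution α ε) 1 := key 1 ⟨zero_le_one, le_rfl⟩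
      _ ≤ op α (subsolution α ε) s := (hf.op hα).monotone hs₁

lemma exists_subsolution (hα : α ∈ Ioo 0 1) :
    ∃ f, Admissible α f ∧ f ≤ op α f ∧ ∀ s > 0, 0 < f s := by
  set p := 2 / (1 - α)
  have hp : 2 < p := two_lt_two_div_one_sub hα
  set c := exp (-1) / (p * (p - 1))
  have hc : 0 < c := div_pos (exp_pos _) (by nlinarith)
  have hc₁ : c ≤ 1 :=
    (div_le_one (by nlinarith)).2 ((exp_le_one_iff.2 (by norm_num)).trans (by nlinarith))
  have hq : 0 < (1 - α)⁻¹ := inv_pos.2 (sub_pos.2 hα.2)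
  set ε := c ^ (1 - α)⁻¹
  have hε : 0 < ε := rpow_pos_of_pos hc _
  have hεc : ε ^ (1 - α) = c := by
    rw [← rpow_mul hc.le, inv_mul_cancel₀ (sub_pos.2 hα.2).ne', rpow_one]
  have hsub : ε = exp (-1) * ε ^ α / (p * (p - 1)) :=
    calc ε = ε ^ (1 - α) * ε ^ α := by rw [← rpow_add hε, sub_add_cancel, rpow_one]
      _ = exp (-1) * ε ^ α / (p * (p - 1)) := by rw [hεc]; ring
  have hε₁ : ε ≤ 1 := rpow_le_one hc.le hc₁ hq.le
  exact ⟨subsolution α ε, admissible_subsolution hα.2 hε.le hε₁,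
    subsolution_le_op hα hε.le hε₁ hsub.le, fun s hs => subsolution_pos hε hs⟩

lemma hasDerivAt_derivOp (hα : 0 ≤ α) (hf : Continuous f) (s : ℝ) :
    HasDerivAt (derivOp α f) (f s ^ α - derivOp α f s) s := by
  have hG : HasDerivAt (fun u => ∫ t in (0:ℝ)..u, exp t * f t ^ α) (exp s * f s ^ α) s :=
    (Continuous.integral_hasStrictDerivAt
      (continuous_exp.mul (hf.rpow_const fun _ => Or.inr hα)) 0 s).hasDerivAt
  have hE : HasDerivAt (fun s => exp (-s)) (-exp (-s)) s := by simpa using (hasDerivAt_neg s).exp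
  refine (hE.mul hG).congr_deriv ?_
  rw [derivOp, ← mul_assoc, ← exp_add, neg_add_cancel, exp_zero]
  ring

lemma Admissible.derivOp_pos (hα : 0 ≤ α) (hf : Admissible α f) (hpos : ∀ t > 0, 0 < f t)
    {s : ℝ} (hs : 0 < s) : 0 < derivOp α f s :=
  mul_pos (exp_pos _) (intervalIntegral_pos_of_pos_on (hf.intervalIntegrable_integrand hα 0 s)
    (fun t ht => mul_pos (exp_pos t) (rpow_pos_of_pos (hpos t ht.1) _)) hs)

theorem exists_profile (hα : α ∈ Ioo 0 1) :
    ∃ ψ ψ' : ℝ → ℝ, (∀ s, HasDerivAt ψ (ψ' s) s) ∧ (∀ s, HasDerivAt ψ' (ψ s ^ α - ψ' s) s) ∧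
      ψ 0 = 0 ∧ ψ' 0 = 0 ∧ (∀ s ≥ 0, ψ s ≤ s ^ (1 - α)⁻¹) ∧
      ∀ s > 0, 0 < ψ s ∧ 0 < ψ' s ∧ ψ' s < ψ s ^ α := by
  obtain ⟨f, hf, hsub, hfpos⟩ := exists_subsolution hα
  obtain ⟨ψ, hψ, hfψ, hfix⟩ := exists_op_eq_self hα hf hsub
  have hderiv (s : ℝ) : HasDerivAt ψ (derivOp α ψ s) s := by
    simpa only [hfix] using hψ.hasDerivAt_op hα.1.le s
  have hpos (s : ℝ) (hs : 0 < s) : 0 < ψ s := (hfpos s hs).trans_le (hfψ s)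
  refine ⟨ψ, derivOp α ψ, hderiv, hasDerivAt_derivOp hα.1.le (continuous_of_hasDerivAt hderiv),
    hψ.eq_zero hα.2 le_rfl, hψ.derivOp_eq_zero hα le_rfl, fun s hs => ?_,
    fun s hs => ⟨hpos s hs, hψ.derivOp_pos hα.1.le hpos hs, ?_⟩⟩
  · simpa [supersolution, max_eq_left hs] using hψ.le_supersolution s
  · calc derivOp α ψ s ≤ (1 - exp (-s)) * ψ s ^ α := hψ.derivOp_le hα.1.le hs.le
      _ < ψ s ^ α := by
          have := rpow_pos_of_pos (hpos s hs) α
          nlinarith [exp_pos (-s)]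

section Shooting

variable {ψ ψ' : ℝ → ℝ}

lemma hasDerivAt_mul_exp_neg_mul (hψ : ∀ s, HasDerivAt ψ (ψ' s) s) (M s : ℝ) :
    HasDerivAt (fun s => ψ s * exp (-M * s)) ((ψ' s - M * ψ s) * exp (-M * s)) s := by
  have hE : HasDerivAt (fun s => exp (-M * s)) (exp (-M * s) * -M) s := by
    simpa using ((hasDerivAt_id s).const_mul (-M)).exp
  exact ((hψ s).mul hE).congr_deriv (by ring)

lemma exists_mul_lt_deriv (hψ : ∀ s, HasDerivAt ψ (ψ' s) s) (h0 : ψ 0 = 0)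
    (hpos : ∀ s > 0, 0 < ψ s) (M : ℝ) : ∃ s > 0, M * ψ s < ψ' s := by
  by_contra! h
  have hanti : AntitoneOn (fun s => ψ s * exp (-M * s)) (Ici 0) :=
    antitoneOn_of_hasDerivWithinAt_nonpos (convex_Ici 0)
      (continuous_of_hasDerivAt fun s => hasDerivAt_mul_exp_neg_mul hψ M s).continuousOn
      (fun s _ => (hasDerivAt_mul_exp_neg_mul hψ M s).hasDerivWithinAt)
      fun s hs => mul_nonpos_of_nonpos_of_nonneg
        (sub_nonpos.2 (h s (by simpa using hs))) (exp_pos _).le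
  have h1 := hanti self_mem_Ici (mem_Ici.2 zero_le_one) zero_le_one
  simp only [h0, zero_mul] at h1
  exact h1.not_gt (mul_pos (hpos 1 one_pos) (exp_pos _))

lemma exists_deriv_lt_mul (hψ : ∀ s, HasDerivAt ψ (ψ' s) s) (hpos : ∀ s > 0, 0 < ψ s)
    {r : ℝ} (hle : ∀ s ≥ 0, ψ s ≤ s ^ r) {M : ℝ} (hM : 0 < M) : ∃ s > 0, ψ' s < M * ψ s := by
  by_contra! h
  have hmono : MonotoneOn (fun s => ψ s * exp (-M * s)) (Ici 1) :=
    monotoneOn_of_hasDerivWithinAt_nonneg (convex_Ici 1)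
      (continuous_of_hasDerivAt fun s => hasDerivAt_mul_exp_neg_mul hψ M s).continuousOn
      (fun s _ => (hasDerivAt_mul_exp_neg_mul hψ M s).hasDerivWithinAt)
      fun s hs => mul_nonneg
        (sub_nonneg.2 (h s (one_pos.trans (by simpa using hs)))) (exp_pos _).le
  have hc : 0 < ψ 1 * exp (-M * 1) := mul_pos (hpos 1 one_pos) (exp_pos _)
  obtain ⟨s, hsmall, hs⟩ := (((tendsto_rpow_mul_exp_neg_mul_atTop_nhds_zero r M hM).eventually
    (gt_mem_nhds hc)).and (eventually_ge_atTop 1)).exists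
  have h1 := hmono self_mem_Ici (mem_Ici.2 hs) hs
  have h2 := mul_le_mul_of_nonneg_right (hle s (zero_le_one.trans hs)) (exp_pos (-M * s)).le
  linarith

theorem exists_mul_deriv_eq_mul (hψ : ∀ s, HasDerivAt ψ (ψ' s) s) (hψ' : Continuous ψ')
    (h0 : ψ 0 = 0) (hpos : ∀ s > 0, 0 < ψ s) {r : ℝ} (hle : ∀ s ≥ 0, ψ s ≤ s ^ r) {a b : ℝ}
    (ha : 0 < a) (hb : 0 < b) : ∃ S > 0, b * ψ' S = a * ψ S := by
  obtain ⟨s₁, hs₁, h₁⟩ := exists_mul_lt_deriv hψ h0 hpos (a / b)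
  obtain ⟨s₂, hs₂, h₂⟩ := exists_deriv_lt_mul hψ hpos hle (div_pos ha hb)
  have hb' (s : ℝ) : b * (a / b * ψ s) = a * ψ s := by field_simp
  have h₁' := hb' s₁ ▸ mul_lt_mul_of_pos_left h₁ hb
  have h₂' := hb' s₂ ▸ mul_lt_mul_of_pos_left h₂ hb
  obtain ⟨S, hS, hS0⟩ := intermediate_value_uIcc
    (hψ'.const_mul b |>.sub ((continuous_of_hasDerivAt hψ).const_mul a)).continuousOn
    (mem_uIcc.2 (Or.inr ⟨(sub_neg.2 h₂').le, (sub_pos.2 h₁').le⟩) : (0:ℝ) ∈ uIcc _ _)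
  exact ⟨S, (lt_min hs₁ hs₂).trans_le hS.1, sub_eq_zero.1 hS0⟩

end Shooting

section Rescaling

variable {ψ ψ' : ℝ → ℝ}

lemma hasDerivAt_const_mul_comp_sub_mul (hψ : ∀ s, HasDerivAt ψ (ψ' s) s) (m S k ξ : ℝ) :
    HasDerivAt (fun ξ => m * ψ (S - k * ξ)) (m * -k * ψ' (S - k * ξ)) ξ := by
  have hlin : HasDerivAt (fun ξ : ℝ => S - k * ξ) (-k) ξ := by
    simpa using ((hasDerivAt_id ξ).const_mul k).const_sub S
  exact (((hψ _).comp ξ hlin).const_mul m).congr_deriv (by ring)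

lemma rescale_ode_eq {α Λ A k x y : ℝ} (hA : 0 < A) (hx : 0 ≤ x)
    (hk2 : Λ * k ^ 2 = A ^ (1 - α)) :
    Λ * (A⁻¹ * -k * -k * (x ^ α - y)) - Λ * k * (A⁻¹ * -k * y) = (A⁻¹ * x) ^ α := by
  rw [mul_rpow (inv_nonneg.2 hA.le) hx, inv_rpow hA.le]
  calc Λ * (A⁻¹ * -k * -k * (x ^ α - y)) - Λ * k * (A⁻¹ * -k * y)
      = Λ * k ^ 2 * A⁻¹ * x ^ α := by ring
    _ = (A ^ α)⁻¹ * x ^ α := by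
        rw [hk2, rpow_sub hA, rpow_one]
        field_simp

theorem exists_isFBPSolution_of_profile {α Λ v₀ S : ℝ} (hΛ : 0 < Λ) (hv₀ : 0 < v₀)
    (hψ : ∀ s, HasDerivAt ψ (ψ' s) s) (hψ' : ∀ s, HasDerivAt ψ' (ψ s ^ α - ψ' s) s)
    (h0 : ψ 0 = 0) (h0' : ψ' 0 = 0) (hS : 0 < S)
    (hpos : ∀ s ∈ Ioc 0 S, 0 < ψ s ∧ 0 < ψ' s ∧ ψ' s < ψ s ^ α)
    (hshoot : v₀ * ψ' S = (1 - v₀) * ψ S) :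
    ∃ c R v, IsFBPSolution α Λ v₀ c R v ∧ ∀ ξ ∈ Ico 0 R, 0 < deriv (deriv v) ξ := by
  have hψS : 0 < ψ S := (hpos S ⟨hS, le_rfl⟩).1
  set A := ψ S / v₀
  have hA : 0 < A := div_pos hψS hv₀
  have hAΛ : 0 < A ^ (1 - α) / Λ := div_pos (rpow_pos_of_pos hA _) hΛ
  set k := √(A ^ (1 - α) / Λ)
  have hk : 0 < k := sqrt_pos.2 hAΛ
  have hk2 : Λ * k ^ 2 = A ^ (1 - α) := by
    rw [sq_sqrt hAΛ.le]
    field_simp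
  set v : ℝ → ℝ := fun ξ => A⁻¹ * ψ (S - k * ξ)
  have hv (ξ : ℝ) : HasDerivAt v (A⁻¹ * -k * ψ' (S - k * ξ)) ξ :=
    hasDerivAt_const_mul_comp_sub_mul hψ _ _ _ _
  have hdv : deriv v = fun ξ => A⁻¹ * -k * ψ' (S - k * ξ) := funext fun ξ => (hv ξ).deriv
  have hv' (ξ : ℝ) : HasDerivAt (deriv v)
      (A⁻¹ * -k * -k * (ψ (S - k * ξ) ^ α - ψ' (S - k * ξ))) ξ :=
    hdv ▸ hasDerivAt_const_mul_comp_sub_mul hψ' _ _ _ _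
  have hd2v (ξ : ℝ) :
      deriv (deriv v) ξ = A⁻¹ * -k * -k * (ψ (S - k * ξ) ^ α - ψ' (S - k * ξ)) :=
    (hv' ξ).deriv
  have hmem (ξ : ℝ) (hξ : ξ ∈ Ico 0 (S / k)) : S - k * ξ ∈ Ioc 0 S :=
    ⟨by linarith [(lt_div_iff₀' hk).1 hξ.2], by nlinarith [hξ.1]⟩
  have hR : S - k * (S / k) = 0 := by rw [mul_div_cancel₀ _ hk.ne', sub_self]
  refine ⟨Λ * k, S / k, v, ⟨mul_pos hΛ hk, div_pos hS hk, ?_, fun ξ _ => (hv' ξ).differentiableAt,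
    fun ξ hξ => ?_, ?_, ?_, ?_, ?_, fun ξ hξ => ?_, fun ξ hξ => ?_⟩, fun ξ hξ => ?_⟩
  · refine (contDiff_one_iff_deriv.2 ⟨fun ξ => (hv ξ).differentiableAt, ?_⟩).contDiffOn
    rw [hdv]
    exact continuous_const.mul ((continuous_of_hasDerivAt hψ').comp (by fun_prop))
  · rw [hd2v, hdv]
    exact rescale_ode_eq hA (hpos _ (hmem ξ ⟨hξ.1.le, hξ.2⟩)).1.le hk2
  · simp only [v, mul_zero, sub_zero, A]
    field_simp
  · rw [hdv]
    simp only [mul_zero, sub_zero, A]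
    field_simp
    linear_combination -hshoot
  · simp only [v, hR, h0, mul_zero]
  · simp only [hdv, hR, h0', mul_zero]
  · exact mul_pos (inv_pos.2 hA) (hpos _ (hmem ξ hξ)).1
  · rw [hdv]
    exact mul_neg_of_neg_of_pos (mul_neg_of_pos_of_neg (inv_pos.2 hA) (neg_neg_of_pos hk))
      (hpos _ (hmem ξ hξ)).2.1
  · rw [hd2v]
    exact mul_pos (by rw [mul_assoc, neg_mul_neg]; positivity) (sub_pos.2 (hpos _ (hmem ξ hξ)).2.2)

end Rescaling

end FBP

/-- Existence of a solution of the scalar free boundary problem, with moreover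
`v > 0`, `v' < 0` and `v'' > 0` on `[0,R)`. -/
theorem fbp_existence (α Λ v₀ : ℝ) (hα : α ∈ Set.Ioo (0:ℝ) 1) (hΛ : 0 < Λ)
    (hv₀ : v₀ ∈ Set.Ioo (0:ℝ) 1) :
    ∃ (c R : ℝ) (v : ℝ → ℝ), IsFBPSolution α Λ v₀ c R v ∧
      ∀ ξ ∈ Set.Ico 0 R, 0 < deriv (deriv v) ξ := by
  obtain ⟨ψ, ψ', hψ, hψ', h0, h0', hle, hpos⟩ := FBP.exists_profile hα
  obtain ⟨S, hS, hshoot⟩ := FBP.exists_mul_deriv_eq_mul hψ (FBP.continuous_of_hasDerivAt hψ') h0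
    (fun s hs => (hpos s hs).1) hle (sub_pos.2 hv₀.2) hv₀.1
  exact FBP.exists_isFBPSolution_of_profile hΛ hv₀.1 hψ hψ' h0 h0' hS (fun s hs => hpos s hs.1)
    hshoot
end
end

section
/- Let α ∈ [0,1], Λ > 0 and c ≥ 0. If y₁ and y₂ are both stable-manifold functions for the parameter c, then y₁(x) = y₂(x) for all x ≥ 0. In other words, there is at most one trajectory of the vector field x' = y, Λ·y' = c·y + x^α in the quadrant {x ≥ 0, y ≤ 0} which converges toward the origin in positive time. -/
open Real Set MeasureTheory Filter

noncomputable section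

/-- A stable-manifold function for the parameter `c`: a continuous function on `[0,∞)`
vanishing at `0`, negative for `x > 0`, differentiable on `(0,∞)`, whose graph is a
trajectory of the vector field `x' = y`, `Λ y' = c y + x^α`, i.e.
`Λ y(x) y'(x) = c y(x) + x^α` for all `x > 0`. -/
def IsStableManifold (α Λ c : ℝ) (y : ℝ → ℝ) : Prop :=
  ContinuousOn y (Set.Ici 0) ∧ y 0 = 0 ∧
  (∀ x > 0, y x < 0) ∧ (∀ x > 0, DifferentiableAt ℝ y x) ∧
  (∀ x > 0, Λ * y x * deriv y x = c * y x + x ^ α)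

/-! In terms of `u = y²` the equation reads `Λ u' = 2 (x^α + c y)`, so for two solutions,
`w = y₁² - y₂²` satisfies `Λ w' = 2c (y₁ - y₂)`. Since `y₁, y₂ ≤ 0`, `w` and `y₁ - y₂` have
opposite signs, hence `w w' ≤ 0`: `w²` is nonincreasing and vanishes at `0`. -/

theorem eq_zero_of_mul_deriv_nonpos {w w' : ℝ → ℝ} {a : ℝ} (hcont : ContinuousOn w (Ici a))
    (hderiv : ∀ x > a, HasDerivAt w (w' x) x) (hsign : ∀ x > a, w x * w' x ≤ 0)
    (ha : w a = 0) : ∀ x ≥ a, w x = 0 := by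
  have hanti : AntitoneOn (fun x => w x ^ 2) (Ici a) := by
    refine antitoneOn_of_hasDerivWithinAt_nonpos (f' := fun x => 2 * w x * w' x)
      (convex_Ici a) (hcont.pow 2) (fun x hx => ?_) (fun x hx => ?_)
    · rw [interior_Ici] at hx
      simpa using ((hderiv x hx).fun_pow 2).hasDerivWithinAt
    · rw [interior_Ici] at hx
      nlinarith [hsign x hx]
  intro x hx
  have hsq : w x ^ 2 ≤ w a ^ 2 := hanti self_mem_Ici hx hx
  rw [ha, zero_pow two_ne_zero] at hsq
  exact pow_eq_zero_iff two_ne_zero |>.mp (hsq.antisymm (sq_nonneg _))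

namespace IsStableManifold

variable {α Λ c : ℝ} {y : ℝ → ℝ}

theorem nonpos (hy : IsStableManifold α Λ c y) {x : ℝ} (hx : 0 ≤ x) : y x ≤ 0 := by
  rcases hx.eq_or_lt with rfl | hx
  · exact hy.2.1.le
  · exact (hy.2.2.1 x hx).le

theorem hasDerivAt_sq (hy : IsStableManifold α Λ c y) (hΛ : Λ ≠ 0) {x : ℝ} (hx : 0 < x) :
    HasDerivAt (fun t => y t ^ 2) (2 * (c * y x + x ^ α) / Λ) x := by
  refine ((hy.2.2.2.1 x hx).hasDerivAt.fun_pow 2).congr_deriv ?_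
  rw [← hy.2.2.2.2 x hx]
  field_simp
  ring

end IsStableManifold

theorem stable_manifold_uniqueness_general (α Λ c : ℝ)
    (hΛ : 0 < Λ) (hc : 0 ≤ c) (y₁ y₂ : ℝ → ℝ)
    (h₁ : IsStableManifold α Λ c y₁) (h₂ : IsStableManifold α Λ c y₂) :
    ∀ x ≥ (0:ℝ), y₁ x = y₂ x := by
  have hsq : ∀ x ≥ (0:ℝ), y₁ x ^ 2 - y₂ x ^ 2 = 0 := by
    refine eq_zero_of_mul_deriv_nonpos (w' := fun x => 2 * c * (y₁ x - y₂ x) / Λ)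
      ((h₁.1.pow 2).sub (h₂.1.pow 2)) (fun x hx => ?_) (fun x hx => ?_) (by simp [h₁.2.1, h₂.2.1])
    · refine ((h₁.hasDerivAt_sq hΛ.ne' hx).sub (h₂.hasDerivAt_sq hΛ.ne' hx)).congr_deriv ?_
      ring
    · have hsum : y₁ x + y₂ x ≤ 0 := add_nonpos (h₁.nonpos hx.le) (h₂.nonpos hx.le)
      have hprod : (y₁ x ^ 2 - y₂ x ^ 2) * (2 * c * (y₁ x - y₂ x) / Λ)
          = 2 * c / Λ * ((y₁ x - y₂ x) ^ 2 * (y₁ x + y₂ x)) := by ring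
      rw [hprod]
      exact mul_nonpos_of_nonneg_of_nonpos (by positivity)
        (mul_nonpos_of_nonneg_of_nonpos (sq_nonneg _) hsum)
  intro x hx
  have habs : |y₁ x| = |y₂ x| := sq_eq_sq_iff_abs_eq_abs _ _ |>.mp (sub_eq_zero.mp (hsq x hx))
  rwa [abs_of_nonpos (h₁.nonpos hx), abs_of_nonpos (h₂.nonpos hx), neg_inj] at habs

/-- Uniqueness of the stable manifold: two stable-manifold functions for the same
parameter `c` coincide on `[0,∞)`. -/
theorem stable_manifold_uniqueness (α Λ c : ℝ) (hα : α ∈ Set.Icc (0:ℝ) 1)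
    (hΛ : 0 < Λ) (hc : 0 ≤ c) (y₁ y₂ : ℝ → ℝ)
    (h₁ : IsStableManifold α Λ c y₁) (h₂ : IsStableManifold α Λ c y₂) :
    ∀ x ≥ (0:ℝ), y₁ x = y₂ x :=
  stable_manifold_uniqueness_general α Λ c hΛ hc y₁ y₂ h₁ h₂
end
end

section
/- Let α ∈ [0,1] and Λ > 0, and let 0 ≤ c₀ < c₁. If y_{c₀} is a stable-manifold function for the parameter c₀ and y_{c₁} is a stable-manifold function for the parameter c₁, then y_{c₀}(x) < y_{c₁}(x) for all x > 0. That is, for each fixed x > 0, the map c ↦ y_c(x) is strictly increasing. -/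
/-!
Put `w = y₀ - y₁`. Dividing the equation by `Λ y` gives `y' = (c + x^α / y) / Λ`, and since
`t ↦ x^α / t` is antitone on the negative reals, `w(x) ≥ 0` forces `w'(x) < 0`. If `w(x) ≥ 0`
for some `x > 0`, then, as `w(0) = 0`, the maximum of `w` on `[0, x]` is attained at some
`p ∈ (0, x]`; there `w(p) ≥ 0`, so `w'(p) < 0`, whereas maximality from the left gives
`w'(p) ≥ 0`.
-/

open Real Set MeasureTheory Filter

noncomputable section

theorem IsMaxOn.deriv_nonneg_of_right_endpoint {f : ℝ → ℝ} {a b : ℝ} (hab : a < b)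
    (hmax : IsMaxOn f (Icc a b) b) (hf : DifferentiableAt ℝ f b) : 0 ≤ deriv f b := by
  have hcone : a - b ∈ posTangentConeAt (Icc a b) b :=
    sub_mem_posTangentConeAt_of_segment_subset
      ((segment_symm ℝ b a).trans_subset (segment_subset_Icc hab.le))
  have hfermat := hmax.localize.hasFDerivWithinAt_nonpos
    hf.hasDerivAt.hasDerivWithinAt.hasFDerivWithinAt hcone
  simp only [ContinuousLinearMap.toSpanSingleton_apply, smul_eq_mul] at hfermat
  exact nonneg_of_mul_nonpos_right hfermat (sub_neg.2 hab)

theorem image_lt_image_left_of_deriv_neg_of_le {f : ℝ → ℝ} {a b : ℝ} (hab : a < b)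
    (hf : ContinuousOn f (Icc a b)) (hdiff : ∀ x ∈ Ioc a b, DifferentiableAt ℝ f x)
    (hneg : ∀ x ∈ Ioc a b, f a ≤ f x → deriv f x < 0) : f b < f a := by
  by_contra! hba
  obtain ⟨p, hp, hpmax⟩ := isCompact_Icc.exists_isMaxOn (nonempty_Icc.2 hab.le) hf
  obtain ⟨q, hq, hqmax⟩ : ∃ q ∈ Ioc a b, IsMaxOn f (Icc a b) q := by
    rcases hp.1.eq_or_lt with rfl | hap
    · exact ⟨b, ⟨hab, le_rfl⟩, fun x hx => (hpmax hx).trans hba⟩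
    · exact ⟨p, ⟨hap, hp.2⟩, hpmax⟩
  have hderiv_neg : deriv f q < 0 := hneg q hq (hqmax ⟨le_rfl, hab.le⟩)
  have hderiv_nonneg : 0 ≤ deriv f q :=
    (hqmax.on_subset (Icc_subset_Icc_right hq.2)).deriv_nonneg_of_right_endpoint hq.1
      (hdiff q hq)
  exact hderiv_neg.not_ge hderiv_nonneg

namespace IsStableManifold

variable {α Λ c c₀ c₁ x : ℝ} {y y₀ y₁ : ℝ → ℝ}

theorem continuousOn (h : IsStableManifold α Λ c y) : ContinuousOn y (Ici 0) := h.1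

theorem apply_zero (h : IsStableManifold α Λ c y) : y 0 = 0 := h.2.1

theorem apply_neg (h : IsStableManifold α Λ c y) (hx : 0 < x) : y x < 0 := h.2.2.1 x hx

theorem differentiableAt (h : IsStableManifold α Λ c y) (hx : 0 < x) :
    DifferentiableAt ℝ y x :=
  h.2.2.2.1 x hx

theorem mul_deriv (h : IsStableManifold α Λ c y) (hx : 0 < x) :
    Λ * y x * deriv y x = c * y x + x ^ α :=
  h.2.2.2.2 x hx

theorem deriv_eq (hΛ : Λ ≠ 0) (h : IsStableManifold α Λ c y) (hx : 0 < x) :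
    deriv y x = (c + x ^ α / y x) / Λ := by
  have hy : y x ≠ 0 := (h.apply_neg hx).ne
  rw [eq_div_iff hΛ, add_div' _ _ _ hy, eq_div_iff hy, ← h.mul_deriv hx]
  ring

theorem deriv_lt_deriv (hΛ : 0 < Λ) (hcc : c₀ < c₁) (h₀ : IsStableManifold α Λ c₀ y₀)
    (h₁ : IsStableManifold α Λ c₁ y₁) (hx : 0 < x) (hle : y₁ x ≤ y₀ x) :
    deriv y₀ x < deriv y₁ x := by
  rw [h₀.deriv_eq hΛ.ne' hx, h₁.deriv_eq hΛ.ne' hx]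
  refine div_lt_div_of_pos_right (add_lt_add_of_lt_of_le hcc ?_) hΛ
  simp only [div_eq_mul_one_div (x ^ α)]
  exact mul_le_mul_of_nonneg_left (one_div_le_one_div_of_neg_of_le (h₀.apply_neg hx) hle)
    (rpow_pos_of_pos hx α).le

end IsStableManifold

theorem stable_manifold_monotone_general (α Λ c₀ c₁ : ℝ)
    (hΛ : 0 < Λ) (hcc : c₀ < c₁) (y₀ y₁ : ℝ → ℝ)
    (h₀ : IsStableManifold α Λ c₀ y₀) (h₁ : IsStableManifold α Λ c₁ y₁) :
    ∀ x > (0:ℝ), y₀ x < y₁ x := by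
  intro x hx
  have hw := image_lt_image_left_of_deriv_neg_of_le (f := y₀ - y₁) hx
    ((h₀.continuousOn.sub h₁.continuousOn).mono Icc_subset_Ici_self)
    (fun t ht => (h₀.differentiableAt ht.1).sub (h₁.differentiableAt ht.1))
    fun t ht hle => by
      simp only [Pi.sub_apply, h₀.apply_zero, h₁.apply_zero, sub_zero, sub_nonneg] at hle
      rw [deriv_sub (h₀.differentiableAt ht.1) (h₁.differentiableAt ht.1), sub_neg]
      exact h₀.deriv_lt_deriv hΛ hcc h₁ ht.1 hle
  simpa only [Pi.sub_apply, h₀.apply_zero, h₁.apply_zero, sub_zero, sub_neg] using hw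

/-- Monotonicity in the parameter: for each `x > 0`, the map `c ↦ y_c(x)` is
strictly increasing. -/
theorem stable_manifold_monotone (α Λ c₀ c₁ : ℝ) (hα : α ∈ Set.Icc (0:ℝ) 1)
    (hΛ : 0 < Λ) (hc₀ : 0 ≤ c₀) (hcc : c₀ < c₁) (y₀ y₁ : ℝ → ℝ)
    (h₀ : IsStableManifold α Λ c₀ y₀) (h₁ : IsStableManifold α Λ c₁ y₁) :
    ∀ x > (0:ℝ), y₀ x < y₁ x :=
  stable_manifold_monotone_general α Λ c₀ c₁ hΛ hcc y₀ y₁ h₀ h₁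
end
end

section
/- Let α ∈ [0,1] and Λ > 0, and let Y : [0,∞) × [0,∞) → ℝ be a function such that for every c ≥ 0, the map x ↦ Y(x,c) is a stable-manifold function for the parameter c. Then Y is continuous as a function of the two variables (x,c) on [0,∞) × [0,∞), and Y(0,c) = 0 for all c ≥ 0. -/
/-!
Integrating `Λ y y' = c y + x ^ α` gives the energy identity
`Λ y ^ 2 / 2 = c P + x ^ (α + 1) / (α + 1)` for the primitive `P x = ∫₀ˣ y`, so
`y = -√(2 / Λ * (c P + x ^ (α + 1) / (α + 1)))` and it suffices that `P` depends continuously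
on `(x, c)`. Now `P` solves `P' = -√(2 / Λ * (c P + x ^ (α + 1) / (α + 1)))`, whose right-hand
side is nonincreasing in `P`; so two such primitives separate only through the change of `c`,
which moves the right-hand side by at most `√(2 / Λ * |c₂ - c₁| * |P₁(X)|)` on `[0, X]`.
Grönwall's inequality then bounds `(P₂ - P₁) ^ 2` on `[0, X]` by a multiple of `|c₂ - c₁|`.
-/

open Real Set MeasureTheory Filter

noncomputable section

open Topology

theorem Real.abs_sqrt_sub_sqrt_le (a b : ℝ) : |√a - √b| ≤ √|a - b| := by
  wlog h : b ≤ a generalizing a b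
  · rw [abs_sub_comm, abs_sub_comm a]
    exact this b a (le_of_not_ge h)
  rw [abs_of_nonneg (sub_nonneg.2 (Real.sqrt_le_sqrt h)), abs_of_nonneg (sub_nonneg.2 h),
    sub_le_iff_le_add, Real.sqrt_le_left (by positivity)]
  nlinarith [Real.sq_sqrt (sub_nonneg.2 h), Real.sq_sqrt' (x := b), le_max_left b 0,
    mul_nonneg (Real.sqrt_nonneg (a - b)) (Real.sqrt_nonneg b)]

/-- Grönwall's inequality for `u ^ 2`, whose right derivative is `2 u u' ≤ u ^ 2 + δ ^ 2`. -/
theorem sq_le_of_mul_deriv_right_le {u u' : ℝ → ℝ} {a b δ : ℝ}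
    (hu : ContinuousOn u (Icc a b)) (ha : u a = 0)
    (hu' : ∀ x ∈ Ico a b, HasDerivWithinAt u (u' x) (Ici x) x)
    (bound : ∀ x ∈ Ico a b, u x * u' x ≤ |u x| * δ) :
    ∀ x ∈ Icc a b, u x ^ 2 ≤ δ ^ 2 * (exp (x - a) - 1) := by
  have hsq : ∀ x ∈ Ico a b, 2 * (u x * u' x) ≤ 1 * u x ^ 2 + δ ^ 2 := fun x hx => by
    nlinarith [bound x hx, sq_abs (u x), two_mul_le_add_sq |u x| δ]
  intro x hx
  simpa [gronwallBound_of_K_ne_0 one_ne_zero] using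
    le_gronwallBound_of_liminf_deriv_right_le (δ := 0) (hu.pow 2)
      (fun x hx _ hr =>
        ((hu' x hx).pow 2).liminf_right_slope_le (by simpa [mul_assoc] using hr))
      (by simp [ha]) hsq x hx

section Primitive

variable {y : ℝ → ℝ}

theorem hasDerivAt_integral_of_continuousOn_Ici (hy : ContinuousOn y (Ici 0)) {x : ℝ}
    (hx : 0 < x) :
    HasDerivAt (fun x => ∫ t in (0:ℝ)..x, y t) (y x) x :=
  intervalIntegral.integral_hasDerivAt_right
    ((hy.mono Icc_subset_Ici_self).intervalIntegrable_of_Icc hx.le)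
    ((hy.mono Ioi_subset_Ici_self).stronglyMeasurableAtFilter isOpen_Ioi x hx)
    (hy.continuousAt (Ici_mem_nhds hx))

theorem hasDerivWithinAt_integral_of_continuousOn_Ici (hy : ContinuousOn y (Ici 0)) {x : ℝ}
    (hx : 0 ≤ x) :
    HasDerivWithinAt (fun x => ∫ t in (0:ℝ)..x, y t) (y x) (Ici x) x :=
  intervalIntegral.integral_hasDerivWithinAt_right (t := Ioi x)
    ((hy.mono Icc_subset_Ici_self).intervalIntegrable_of_Icc hx)
    ((hy.mono fun _ ht => hx.trans (le_of_lt ht)).stronglyMeasurableAtFilter_nhdsWithin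
      measurableSet_Ioi x)
    ((hy x hx).mono fun _ ht => hx.trans (le_of_lt ht))

theorem continuousOn_integral_of_continuousOn_Ici (hy : ContinuousOn y (Ici 0)) :
    ContinuousOn (fun x => ∫ t in (0:ℝ)..x, y t) (Ici 0) := by
  intro x hx
  rcases (mem_Ici.mp hx).eq_or_lt with rfl | hx
  · exact (hasDerivWithinAt_integral_of_continuousOn_Ici hy le_rfl).continuousWithinAt
  · exact (hasDerivAt_integral_of_continuousOn_Ici hy hx).continuousAt.continuousWithinAt

theorem abs_integral_le_of_continuousOn_Ici (hy : ContinuousOn y (Ici 0))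
    (hy₀ : ∀ x ∈ Ioi 0, y x ≤ 0) {x X : ℝ} (hx : x ∈ Icc 0 X) :
    |∫ t in (0:ℝ)..x, y t| ≤ |∫ t in (0:ℝ)..X, y t| := by
  have hanti : AntitoneOn (fun x => ∫ t in (0:ℝ)..x, y t) (Ici 0) :=
    antitoneOn_of_hasDerivWithinAt_nonpos (convex_Ici 0)
      (continuousOn_integral_of_continuousOn_Ici hy)
      (fun x hx => by
        rw [interior_Ici] at hx ⊢
        exact (hasDerivAt_integral_of_continuousOn_Ici hy hx).hasDerivWithinAt)
      (fun x hx => hy₀ x (by rwa [interior_Ici] at hx))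
  have h0x := hanti self_mem_Ici hx.1 hx.1
  have hxX := hanti hx.1 (hx.1.trans hx.2) hx.2
  simp only [intervalIntegral.integral_same] at h0x
  rw [abs_of_nonpos h0x, abs_of_nonpos (hxX.trans h0x)]
  linarith

end Primitive

namespace IsStableManifold

variable {α Λ c c₁ c₂ : ℝ} {y y₁ y₂ : ℝ → ℝ}

theorem energy (hα : -1 < α) (hy : IsStableManifold α Λ c y) {x : ℝ} (hx : 0 ≤ x) :
    Λ * y x ^ 2 / 2 = c * (∫ t in (0:ℝ)..x, y t) + x ^ (α + 1) / (α + 1) := by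
  obtain ⟨hcont, hy0, -, hdiff, hode⟩ := hy
  have hα1 : 0 < α + 1 := by linarith
  set F : ℝ → ℝ := fun u =>
    Λ * y u ^ 2 / 2 - c * (∫ t in (0:ℝ)..u, y t) - u ^ (α + 1) / (α + 1)
  have hF0 : F 0 = 0 := by simp [F, hy0, Real.zero_rpow hα1.ne']
  have hFcont : ContinuousOn F (Ici 0) := by
    have hP := continuousOn_integral_of_continuousOn_Ici hcont
    have hpow : Continuous fun u : ℝ => u ^ (α + 1) := Real.continuous_rpow_const hα1.le
    fun_prop
  have hFderiv : ∀ u > 0, HasDerivAt F 0 u := by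
    intro u hu
    have hpow := (Real.hasDerivAt_rpow_const (p := α + 1) (Or.inl hu.ne')).div_const (α + 1)
    refine ((((((hdiff u hu).hasDerivAt.pow 2).const_mul Λ).div_const 2).sub
      ((hasDerivAt_integral_of_continuousOn_Ici hcont hu).const_mul c)).sub hpow).congr_deriv ?_
    rw [add_sub_cancel_right, mul_div_cancel_left₀ _ hα1.ne']
    linear_combination hode u hu
  suffices F x = 0 by simp only [F] at this; linarith
  rcases hx.eq_or_lt with rfl | hx
  · exact hF0
  -- `y` need not be differentiable at `0`; the mean value theorem only needs continuity there.
  obtain ⟨-, -, hslope⟩ := exists_hasDerivAt_eq_slope F (fun _ => 0) hx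
    (hFcont.mono Icc_subset_Ici_self) fun u hu => hFderiv u hu.1
  rw [hF0, sub_zero, sub_zero, eq_comm, div_eq_zero_iff] at hslope
  exact hslope.resolve_right hx.ne'

theorem eq_neg_sqrt (hα : -1 < α) (hΛ : Λ ≠ 0) (hy : IsStableManifold α Λ c y) {x : ℝ}
    (hx : 0 ≤ x) :
    y x = -√(2 / Λ * (c * (∫ t in (0:ℝ)..x, y t) + x ^ (α + 1) / (α + 1))) := by
  have hy_nonpos : y x ≤ 0 := by
    rcases hx.eq_or_lt with rfl | hx
    · exact hy.2.1.le
    · exact (hy.2.2.1 x hx).le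
  rw [← hy.energy hα hx, show 2 / Λ * (Λ * y x ^ 2 / 2) = y x ^ 2 by field_simp,
    Real.sqrt_sq_eq_abs, abs_of_nonpos hy_nonpos, neg_neg]

theorem sq_integral_sub_le (hα : -1 < α) (hΛ : 0 < Λ) (hc₂ : 0 ≤ c₂)
    (hy₁ : IsStableManifold α Λ c₁ y₁) (hy₂ : IsStableManifold α Λ c₂ y₂)
    {x X : ℝ} (hx : x ∈ Icc 0 X) :
    ((∫ t in (0:ℝ)..x, y₂ t) - ∫ t in (0:ℝ)..x, y₁ t) ^ 2 ≤
      2 / Λ * |c₂ - c₁| * |∫ t in (0:ℝ)..X, y₁ t| * (exp X - 1) := by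
  let P₁ : ℝ → ℝ := fun x => ∫ t in (0:ℝ)..x, y₁ t
  let P₂ : ℝ → ℝ := fun x => ∫ t in (0:ℝ)..x, y₂ t
  set δ := √(2 / Λ * |c₂ - c₁| * |P₁ X|)
  have hδ : δ ^ 2 = 2 / Λ * |c₂ - c₁| * |P₁ X| := Real.sq_sqrt (by positivity)
  have bound : ∀ x ∈ Ico 0 X,
      (P₂ x - P₁ x) * (y₂ x - y₁ x) ≤ |P₂ x - P₁ x| * δ := by
    intro x hx
    let S : ℝ → ℝ → ℝ := fun c p => √(2 / Λ * (c * p + x ^ (α + 1) / (α + 1)))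
    have hmono : Monotone (S c₂) := fun p q hpq => Real.sqrt_le_sqrt (by gcongr)
    have hsplit :
        y₂ x - y₁ x = S c₂ (P₁ x) - S c₂ (P₂ x) + (S c₁ (P₁ x) - S c₂ (P₁ x)) := by
      rw [hy₁.eq_neg_sqrt hα hΛ.ne' hx.1, hy₂.eq_neg_sqrt hα hΛ.ne' hx.1]
      ring
    have hsign : (P₂ x - P₁ x) * (S c₂ (P₁ x) - S c₂ (P₂ x)) ≤ 0 := by
      rcases le_total (P₁ x) (P₂ x) with h | h <;> nlinarith [hmono h]
    have hsmall : |S c₁ (P₁ x) - S c₂ (P₁ x)| ≤ δ := by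
      refine (Real.abs_sqrt_sub_sqrt_le _ _).trans (Real.sqrt_le_sqrt ?_)
      rw [show 2 / Λ * (c₁ * P₁ x + x ^ (α + 1) / (α + 1)) - 2 / Λ * (c₂ * P₁ x +
          x ^ (α + 1) / (α + 1)) = 2 / Λ * (c₁ - c₂) * P₁ x by ring, abs_mul, abs_mul,
        abs_of_pos (by positivity : 0 < 2 / Λ), abs_sub_comm]
      exact mul_le_mul_of_nonneg_left (abs_integral_le_of_continuousOn_Ici hy₁.1
        (fun x hx => (hy₁.2.2.1 x hx).le) (Ico_subset_Icc_self hx)) (by positivity)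
    calc (P₂ x - P₁ x) * (y₂ x - y₁ x)
        = (P₂ x - P₁ x) * (S c₂ (P₁ x) - S c₂ (P₂ x)) +
            (P₂ x - P₁ x) * (S c₁ (P₁ x) - S c₂ (P₁ x)) := by
          rw [hsplit]; ring
      _ ≤ 0 + |P₂ x - P₁ x| * δ := by
          refine add_le_add hsign ((le_abs_self _).trans ?_)
          rw [abs_mul]
          gcongr
      _ = |P₂ x - P₁ x| * δ := zero_add _
  have hgronwall := sq_le_of_mul_deriv_right_le
    (((continuousOn_integral_of_continuousOn_Ici hy₂.1).sub
      (continuousOn_integral_of_continuousOn_Ici hy₁.1)).mono Icc_subset_Ici_self)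
    (by simp)
    (fun x hx => (hasDerivWithinAt_integral_of_continuousOn_Ici hy₂.1 hx.1).sub
      (hasDerivWithinAt_integral_of_continuousOn_Ici hy₁.1 hx.1))
    bound x hx
  rw [hδ, sub_zero] at hgronwall
  exact hgronwall.trans (by gcongr; exact hx.2)

end IsStableManifold

theorem continuousOn_integral_of_isStableManifold {α Λ : ℝ} (hα : -1 < α) (hΛ : 0 < Λ)
    {Y : ℝ → ℝ → ℝ} (hY : ∀ c ≥ (0:ℝ), IsStableManifold α Λ c (fun x => Y x c)) :
    ContinuousOn (fun p : ℝ × ℝ => ∫ t in (0:ℝ)..p.1, Y t p.2) (Ici 0 ×ˢ Ici 0) := by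
  rintro ⟨x₀, c₀⟩ ⟨hx₀, hc₀⟩
  set X := x₀ + 1
  set K := 2 / Λ * |∫ t in (0:ℝ)..X, Y t c₀| * (exp X - 1)
  have hnear : ∀ᶠ q in 𝓝[Ici 0 ×ˢ Ici 0] (x₀, c₀),
      ‖(∫ t in (0:ℝ)..q.1, Y t q.2) - ∫ t in (0:ℝ)..q.1, Y t c₀‖ ≤
        √(K * |q.2 - c₀|) := by
    filter_upwards [self_mem_nhdsWithin, nhdsWithin_le_nhds
      (continuous_fst.tendsto (x₀, c₀) (Iio_mem_nhds (lt_add_one x₀)))] with q hq hqX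
    exact Real.abs_le_sqrt ((IsStableManifold.sq_integral_sub_le hα hΛ hq.2 (hY c₀ hc₀)
      (hY q.2 hq.2) ⟨hq.1, le_of_lt hqX⟩).trans_eq (by ring))
  have hsmall : Tendsto (fun q : ℝ × ℝ => √(K * |q.2 - c₀|))
      (𝓝[Ici 0 ×ˢ Ici 0] (x₀, c₀)) (𝓝 0) := by
    have hcont : Continuous fun q : ℝ × ℝ => √(K * |q.2 - c₀|) := by fun_prop
    simpa using (hcont.tendsto (x₀, c₀)).mono_left nhdsWithin_le_nhds
  have hslice : ContinuousWithinAt (fun q : ℝ × ℝ => ∫ t in (0:ℝ)..q.1, Y t c₀)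
      (Ici 0 ×ˢ Ici 0) (x₀, c₀) :=
    ((continuousOn_integral_of_continuousOn_Ici (hY c₀ hc₀).1).comp continuousOn_fst
      fun _ hq => hq.1) _ ⟨hx₀, hc₀⟩
  simpa [ContinuousWithinAt] using (squeeze_zero_norm' hnear hsmall).add hslice

/-- Joint continuity: if `Y(x,c)` is for each `c ≥ 0` the stable-manifold function
for `c`, then `Y` is continuous as a function of the two variables on
`[0,∞) × [0,∞)`, and `Y(0,c) = 0` for all `c ≥ 0`. -/
theorem stable_manifold_joint_continuity (α Λ : ℝ) (hα : α ∈ Set.Icc (0:ℝ) 1)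
    (hΛ : 0 < Λ) (Y : ℝ → ℝ → ℝ)
    (hY : ∀ c ≥ (0:ℝ), IsStableManifold α Λ c (fun x => Y x c)) :
    ContinuousOn (fun p : ℝ × ℝ => Y p.1 p.2) (Set.Ici 0 ×ˢ Set.Ici 0) ∧
      ∀ c ≥ (0:ℝ), Y 0 c = 0 := by
  have hα' : -1 < α := by linarith [hα.1]
  refine ⟨?_, fun c hc => (hY c hc).2.1⟩
  have hP := continuousOn_integral_of_isStableManifold hα' hΛ hY
  have hpow : Continuous fun x : ℝ => x ^ (α + 1) := Real.continuous_rpow_const (by linarith)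
  refine ContinuousOn.congr (f := fun p : ℝ × ℝ =>
      -√(2 / Λ * (p.2 * (∫ t in (0:ℝ)..p.1, Y t p.2) + p.1 ^ (α + 1) / (α + 1))))
    (by fun_prop) fun p hp => (hY p.2 hp.2).eq_neg_sqrt hα' hΛ.ne' hp.1
end
end

section
/- Let α ∈ (0,1), Λ > 0 and v₀ ∈ (0,1). Suppose c > 0 and y is a stable-manifold function for the parameter c satisfying y(v₀) = −(c/Λ)·(1−v₀). Then c satisfies the estimates (2Λ/(1+α))^{1/2}·v₀^{(1+α)/2} < c < min( (2Λ/(1+α))^{1/2}·v₀^{(1+α)/2}/(1−v₀), (Λ/(1−v₀))^{1/2}·v₀^{α/2} ). -/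
/-!
The energy `E(x) = Λ y(x)² / 2 - x^(α+1) / (α+1)` of the trajectory satisfies `E' = c y < 0` and
`E(0) = 0`, so `Λ y² / 2 < x^(α+1) / (α+1)`; at `v₀` this is the first upper bound. Since
`y' < c / Λ`, on `[0, v₀]` the graph of `y` lies above the line of slope `c / Λ` through
`(v₀, y v₀)`, which the initial condition makes pass through `(0, -c / Λ)`; comparing `E' = c y`
with `c` times that line gives `v₀^(α+1) / (α+1) < c² / (2Λ)`, the lower bound. Finally the
trajectory stays strictly above the nullcline `c y + x^α = 0`: near `0` the energy bound gives
`y = O(x^((1+α)/2)) = o(x^α)`, and on the nullcline `y' = 0` while `-x^α / c` strictly decreases.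
At `v₀` this is the second upper bound.
-/

open Real Set MeasureTheory Filter

noncomputable section

lemma Real.sqrt_mul_rpow_div_two {a v : ℝ} (p : ℝ) (ha : 0 ≤ a) (hv : 0 ≤ v) :
    √a * v ^ (p / 2) = √(a * v ^ p) := by
  rw [Real.sqrt_mul ha, Real.sqrt_eq_rpow (v ^ p), ← Real.rpow_mul hv]
  ring_nf

open Topology

namespace IsStableManifold

def energy_s11 (α Λ : ℝ) (y : ℝ → ℝ) (x : ℝ) : ℝ :=
  Λ * y x ^ 2 / 2 - x ^ (α + 1) / (α + 1)

variable {α Λ c : ℝ} {y : ℝ → ℝ}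

lemma energy_zero (hy : IsStableManifold α Λ c y) (hα : α + 1 ≠ 0) : energy_s11 α Λ y 0 = 0 := by
  simp [energy_s11, hy.2.1, Real.zero_rpow hα]

lemma hasDerivAt_energy (hy : IsStableManifold α Λ c y) (hα : α + 1 ≠ 0) {x : ℝ} (hx : 0 < x) :
    HasDerivAt (energy_s11 α Λ y) (c * y x) x := by
  have hyx := (hy.2.2.2.1 x hx).hasDerivAt
  have hrpow := (Real.hasDerivAt_rpow_const (p := α + 1) (Or.inl hx.ne')).div_const (α + 1)
  refine (((hyx.pow 2).const_mul Λ).div_const 2 |>.sub hrpow).congr_deriv ?_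
  rw [add_sub_cancel_right, mul_div_cancel_left₀ _ hα]
  linear_combination hy.2.2.2.2 x hx

lemma continuousOn_energy (hy : IsStableManifold α Λ c y) (hα : -1 < α) :
    ContinuousOn (energy_s11 α Λ y) (Ici 0) :=
  ((continuousOn_const.mul (hy.1.pow 2)).div_const 2).sub
    ((Real.continuous_rpow_const (by linarith)).continuousOn.div_const _)

lemma energy_neg (hy : IsStableManifold α Λ c y) (hα : -1 < α) (hc : 0 < c) {x : ℝ}
    (hx : 0 < x) : energy_s11 α Λ y x < 0 := by
  have hanti : StrictAntiOn (energy_s11 α Λ y) (Ici 0) := by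
    refine strictAntiOn_of_hasDerivWithinAt_neg (f' := fun x => c * y x) (convex_Ici 0)
      (hy.continuousOn_energy hα) (fun x hx => ?_) (fun x hx => ?_) <;> rw [interior_Ici] at hx
    · exact (hy.hasDerivAt_energy (by linarith) hx).hasDerivWithinAt
    · exact mul_neg_of_pos_of_neg hc (hy.2.2.1 x hx)
  simpa only [hy.energy_zero (by linarith)] using hanti self_mem_Ici hx.le hx

lemma deriv_lt (hy : IsStableManifold α Λ c y) (hΛ : 0 < Λ) {x : ℝ} (hx : 0 < x) :
    deriv y x < c / Λ := by
  have hode := hy.2.2.2.2 x hx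
  have hyx := hy.2.2.1 x hx
  have := Real.rpow_pos_of_pos hx α
  rw [lt_div_iff₀ hΛ]
  nlinarith

lemma deriv_eq_zero (hy : IsStableManifold α Λ c y) (hΛ : Λ ≠ 0) {x : ℝ} (hx : 0 < x)
    (h : c * y x + x ^ α = 0) : deriv y x = 0 := by
  have := hy.2.2.2.2 x hx
  rw [h] at this
  simpa [hΛ, (hy.2.2.1 x hx).ne] using this

lemma strictAntiOn_sub_mul (hy : IsStableManifold α Λ c y) (hΛ : 0 < Λ) :
    StrictAntiOn (fun x => y x - c / Λ * x) (Ici 0) := by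
  refine strictAntiOn_of_hasDerivWithinAt_neg (f' := fun x => deriv y x - c / Λ) (convex_Ici 0)
    (hy.1.sub (continuousOn_const.mul continuousOn_id)) (fun x hx => ?_) (fun x hx => ?_) <;>
    rw [interior_Ici] at hx
  · exact ((hy.2.2.2.1 x hx).hasDerivAt.sub ((hasDerivAt_id x).const_mul (c / Λ))
      |>.congr_deriv (by ring)).hasDerivWithinAt
  · simpa using hy.deriv_lt hΛ hx

lemma rpow_lt_sq_sub (hy : IsStableManifold α Λ c y) (hα : -1 < α) (hΛ : 0 < Λ) (hc : 0 < c)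
    {v : ℝ} (hv : 0 < v) : v ^ (α + 1) / (α + 1) < Λ / 2 * (y v - c / Λ * v) ^ 2 := by
  -- On `[0, v]` the graph of `y` lies above the line of slope `c / Λ` through `(v, y v)`;
  -- subtracting `c` times a primitive of that line from the energy leaves an increasing function.
  set line : ℝ → ℝ := fun x => y v + c / Λ * (x - v)
  have hmono : StrictMonoOn
      (fun x => energy_s11 α Λ y x - c * (y v * x + c / Λ * (x ^ 2 / 2 - v * x))) (Icc 0 v) := by
    refine strictMonoOn_of_hasDerivWithinAt_pos (f' := fun x => c * y x - c * line x)
      (convex_Icc 0 v) (((hy.continuousOn_energy hα).mono Icc_subset_Ici_self).sub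
        (by fun_prop)) (fun x hx => ?_) (fun x hx => ?_) <;> rw [interior_Icc] at hx
    · have hG : HasDerivAt (fun x => c * (y v * x + c / Λ * (x ^ 2 / 2 - v * x)))
          (c * line x) x := by
        refine ((((hasDerivAt_id x).const_mul (y v)).add ((((hasDerivAt_pow 2 x).div_const 2).sub
          ((hasDerivAt_id x).const_mul v)).const_mul (c / Λ))).const_mul c).congr_deriv ?_
        simp only [line]
        ring
      exact ((hy.hasDerivAt_energy (by linarith) hx.1).sub hG).hasDerivWithinAt
    · have := hy.strictAntiOn_sub_mul hΛ (mem_Ici.2 hx.1.le) (mem_Ici.2 hv.le) hx.2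
      simp only [line]
      nlinarith
  have key := hmono (left_mem_Icc.2 hv.le) (right_mem_Icc.2 hv.le) hv
  simp only [hy.energy_zero (by linarith), mul_zero, ne_eq, OfNat.ofNat_ne_zero,
    not_false_eq_true, zero_pow, zero_div, sub_self, add_zero, sub_pos] at key
  have hsq : Λ / 2 * (y v - c / Λ * v) ^ 2 - v ^ (α + 1) / (α + 1)
      = energy_s11 α Λ y v - c * (y v * v + c / Λ * (v ^ 2 / 2 - v * v)) := by
    rw [energy_s11]
    field_simp
    ring
  linarith

lemma eventually_neg_rpow_le (hy : IsStableManifold α Λ c y) (hα : α ∈ Ioo (-1) 1) (hΛ : 0 < Λ)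
    (hc : 0 < c) : ∀ᶠ x in 𝓝[>] 0, -x ^ α ≤ c * y x := by
  obtain ⟨hα₀, hα₁⟩ := hα
  have hα₀' : 0 < α + 1 := by linarith
  set K := 2 * c ^ 2 / (Λ * (α + 1))
  have hsmall : Tendsto (fun x : ℝ => K * x ^ (1 - α)) (𝓝[>] 0) (𝓝 0) := by
    have := (Real.continuousAt_rpow_const 0 (1 - α) (Or.inr (by linarith))).tendsto.const_mul K
    rw [Real.zero_rpow (by linarith), mul_zero] at this
    exact this.mono_left nhdsWithin_le_nhds
  filter_upwards [hsmall.eventually (gt_mem_nhds one_pos), self_mem_nhdsWithin] with x hxK hx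
  have hx : 0 < x := hx
  have hE := hy.energy_neg hα₀ hc hx
  rw [energy_s11, sub_neg, div_lt_div_iff₀ two_pos hα₀'] at hE
  have hsplit : x ^ (α + 1) = x ^ (1 - α) * (x ^ α) ^ 2 := by
    rw [← Real.rpow_natCast, ← Real.rpow_mul hx.le, ← Real.rpow_add hx]
    ring_nf
  have hsq : (c * y x) ^ 2 ≤ (x ^ α) ^ 2 :=
    calc (c * y x) ^ 2 = c ^ 2 * y x ^ 2 := by ring
      _ ≤ c ^ 2 * (2 * x ^ (α + 1) / (Λ * (α + 1))) := by
        gcongr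
        rw [le_div_iff₀ (by positivity)]
        linarith
      _ = K * x ^ (1 - α) * (x ^ α) ^ 2 := by rw [hsplit]; ring
      _ ≤ (x ^ α) ^ 2 := mul_le_of_le_one_left (sq_nonneg _) hxK.le
  exact (abs_le_of_sq_le_sq' hsq (Real.rpow_nonneg hx.le α)).1

lemma neg_rpow_le (hy : IsStableManifold α Λ c y) (hα : α ∈ Ioo 0 1) (hΛ : 0 < Λ) (hc : 0 < c)
    {x : ℝ} (hx : 0 < x) : -x ^ α ≤ c * y x := by
  obtain ⟨δ, hδ, hδx⟩ := ((hy.eventually_neg_rpow_le ⟨by linarith [hα.1], hα.2⟩ hΛ hc).and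
    (Ioo_mem_nhdsGT hx)).exists
  have hpos : Icc δ x ⊆ Ioi 0 := fun t ht => hδx.1.trans_le ht.1
  refine image_le_of_deriv_right_lt_deriv_boundary' (f := fun t => -t ^ α)
    (f' := fun t => -(α * t ^ (α - 1))) (B := fun t => c * y t) (B' := fun t => c * deriv y t) ?_
    (fun t ht => ?_) hδ ((hy.1.mono (hpos.trans Ioi_subset_Ici_self)).const_mul c)
    (fun t ht => ?_) (fun t ht hyt => ?_) (right_mem_Icc.2 hδx.2.le)
  · exact (Real.continuous_rpow_const hα.1.le).continuousOn.neg
  · exact (Real.hasDerivAt_rpow_const (Or.inl (hpos (Ico_subset_Icc_self ht)).ne')).neg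
      |>.hasDerivWithinAt
  · exact ((hy.2.2.2.1 t (hpos (Ico_subset_Icc_self ht))).hasDerivAt.const_mul c).hasDerivWithinAt
  · have ht : 0 < t := hpos (Ico_subset_Icc_self ht)
    rw [hy.deriv_eq_zero hΛ.ne' ht (by linarith), mul_zero, neg_lt_zero]
    exact mul_pos hα.1 (Real.rpow_pos_of_pos ht _)

lemma mul_add_rpow_pos (hy : IsStableManifold α Λ c y) (hα : α ∈ Ioo 0 1) (hΛ : 0 < Λ)
    (hc : 0 < c) {x : ℝ} (hx : 0 < x) : 0 < c * y x + x ^ α := by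
  refine (neg_le_iff_add_nonneg.1 (hy.neg_rpow_le hα hΛ hc hx)).lt_of_ne' fun h => ?_
  have hmin : IsLocalMin (fun t => c * y t + t ^ α) x :=
    Filter.eventually_of_mem (Ioi_mem_nhds hx) fun t ht => by
      change c * y x + x ^ α ≤ c * y t + t ^ α
      rw [h]
      exact neg_le_iff_add_nonneg.1 (hy.neg_rpow_le hα hΛ hc ht)
  have hderiv := ((hy.2.2.2.1 x hx).hasDerivAt.const_mul c).add
    (Real.hasDerivAt_rpow_const (p := α) (Or.inl hx.ne'))
  rw [hy.deriv_eq_zero hΛ.ne' hx h, mul_zero, zero_add] at hderiv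
  exact (mul_pos hα.1 (Real.rpow_pos_of_pos hx _)).ne' (hmin.hasDerivAt_eq_zero hderiv)

end IsStableManifold

/-- Estimates for the speed `c(v₀)`:
`(2Λ/(1+α))^{1/2} v₀^{(1+α)/2} < c < min((2Λ/(1+α))^{1/2} v₀^{(1+α)/2}/(1−v₀), (Λ/(1−v₀))^{1/2} v₀^{α/2})`. -/
theorem speed_estimates (α Λ v₀ c : ℝ) (hα : α ∈ Set.Ioo (0:ℝ) 1)
    (hΛ : 0 < Λ) (hv₀ : v₀ ∈ Set.Ioo (0:ℝ) 1) (hc : 0 < c) (y : ℝ → ℝ)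
    (hy : IsStableManifold α Λ c y) (hinit : y v₀ = -(c / Λ) * (1 - v₀)) :
    Real.sqrt (2 * Λ / (1 + α)) * v₀ ^ ((1 + α) / 2) < c ∧
      c < min (Real.sqrt (2 * Λ / (1 + α)) * v₀ ^ ((1 + α) / 2) / (1 - v₀))
              (Real.sqrt (Λ / (1 - v₀)) * v₀ ^ (α / 2)) := by
  obtain ⟨hv₀, hv₁⟩ := hv₀
  have hα₁ : 0 < 1 + α := by linarith [hα.1]
  have h1v : 0 < 1 - v₀ := sub_pos.2 hv₁
  have hupper := hy.energy_neg (by linarith) hc hv₀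
  have hlower := hy.rpow_lt_sq_sub (by linarith) hΛ hc hv₀
  have hnull := hy.mul_add_rpow_pos hα hΛ hc hv₀
  rw [IsStableManifold.energy_s11, hinit, add_comm α] at hupper
  rw [hinit, add_comm α] at hlower
  rw [hinit] at hnull
  rw [Real.sqrt_mul_rpow_div_two _ (by positivity) hv₀.le,
    Real.sqrt_mul_rpow_div_two _ (by positivity) hv₀.le]
  refine ⟨(Real.sqrt_lt' hc).2 ?_, lt_min ((lt_div_iff₀ h1v).2 ((Real.lt_sqrt (by positivity)).2 ?_))
    ((Real.lt_sqrt hc.le).2 ?_)⟩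
  · field_simp at hlower ⊢
    linarith
  · field_simp at hupper ⊢
    linarith
  · field_simp at hnull ⊢
    linarith
end
end

section
/- Let α ∈ (0,1), Λ > 0 and θ ∈ (0,1). Suppose c > 0, 0 < R < ∞, and u, v : ℝ → ℝ are continuously differentiable on [0,R] and twice differentiable on [0,R), satisfying u''(ξ) − c·u'(ξ) = −v(ξ)^α and Λ·v''(ξ) − c·v'(ξ) = v(ξ)^α for all ξ ∈ (0,R), with boundary conditions u(0) = θ, u'(0) = c·θ, 0 < v(0) < 1, v'(0) = −(c/Λ)·(1−v(0)), and free boundary conditions v(R) = v'(R) = 0, u(R) = 1, u'(R) = 0. Then the following two integral identities hold: θ + Λ·v(0) = 1 − c·(1−Λ)·∫₀^R e^{−cs}·v(s) ds, and θ + v(0) = 1 − (1−Λ)·∫₀^R e^{−cs}·v'(s) ds. -/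
open Real Set MeasureTheory Filter

/-! Adding the two equations gives `(u + Λ v)'' = c (u + v)'`, which integrates once, with the data
at `ξ = 0`, to the first integral `(u + Λ v)' = c (u + v - 1)` on `(0, R)`. Thus `F = u + Λ v - 1`
solves `F' = c F + c (1 - Λ) v`, and the integrating factor `e^{-cξ}` together with `F(R) = 0`
gives the first identity. Integrating `e^{-cs} v'` by parts, using `v(R) = 0`, turns it into
the second. -/

theorem ContDiffOn.hasDerivAt_of_mem_Ioo {E : Type*} [NormedAddCommGroup E] [NormedSpace ℝ E]
    {f : ℝ → E} {a b x : ℝ} (hf : ContDiffOn ℝ 1 f (Icc a b)) (hx : x ∈ Ioo a b) :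
    HasDerivAt f (deriv f x) x :=
  ((hf.differentiableOn one_ne_zero x (Ioo_subset_Icc_self hx)).differentiableAt
    (Icc_mem_nhds hx.1 hx.2)).hasDerivAt

theorem ContDiffOn.intervalIntegrable_deriv {E : Type*} [NormedAddCommGroup E]
    [NormedSpace ℝ E] {f : ℝ → E} {a b : ℝ} (hab : a < b) (hf : ContDiffOn ℝ 1 f (Icc a b)) :
    IntervalIntegrable (deriv f) volume a b := by
  rw [intervalIntegrable_iff_integrableOn_Icc_of_le hab.le]
  refine (hf.continuousOn_derivWithin (uniqueDiffOn_Icc hab) le_rfl).integrableOn_Icc.congr ?_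
  rw [← Measure.restrict_congr_set Ioo_ae_eq_Icc]
  filter_upwards [ae_restrict_mem measurableSet_Ioo] with x hx
  exact derivWithin_of_mem_nhds (Icc_mem_nhds hx.1 hx.2)

theorem eq_of_hasDerivAt_zero {E : Type*} [NormedAddCommGroup E] [NormedSpace ℝ E]
    [CompleteSpace E] {f : ℝ → E} {a b : ℝ} (hab : a ≤ b) (hf : ContinuousOn f (Icc a b))
    (hf' : ∀ x ∈ Ioo a b, HasDerivAt f 0 x) : f b = f a := by
  have h := intervalIntegral.integral_eq_sub_of_hasDerivAt_of_le hab hf hf'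
    intervalIntegrable_const
  rw [intervalIntegral.integral_zero] at h
  exact sub_eq_zero.mp h.symm

theorem integral_exp_neg_mul_mul_eq_of_hasDerivAt {F g : ℝ → ℝ} {a b c : ℝ} (hab : a ≤ b)
    (hF : ContinuousOn F (Icc a b)) (hF' : ∀ x ∈ Ioo a b, HasDerivAt F (c * F x + g x) x)
    (hg : IntervalIntegrable g volume a b) :
    ∫ s in a..b, exp (-(c * s)) * g s = exp (-(c * b)) * F b - exp (-(c * a)) * F a := by
  have hexp : Continuous fun s : ℝ => exp (-(c * s)) := by fun_prop
  refine intervalIntegral.integral_eq_sub_of_hasDerivAt_of_le hab (hexp.continuousOn.mul hF)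
    (fun x hx => ?_) (hg.continuousOn_mul hexp.continuousOn)
  exact ((hasDerivAt_const_mul c).fun_neg.exp.mul (hF' x hx)).congr_deriv (by ring)

theorem integral_exp_neg_mul_mul_deriv {v : ℝ → ℝ} {a b c : ℝ} (hab : a < b)
    (hv : ContDiffOn ℝ 1 v (Icc a b)) :
    ∫ s in a..b, exp (-(c * s)) * deriv v s =
      exp (-(c * b)) * v b - exp (-(c * a)) * v a + c * ∫ s in a..b, exp (-(c * s)) * v s := by
  have hexp : ContinuousOn (fun s : ℝ => exp (-(c * s))) (uIcc a b) := by fun_prop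
  have hv_int : IntervalIntegrable v volume a b := hv.continuousOn.intervalIntegrable_of_Icc hab.le
  have hv'_int := hv.intervalIntegrable_deriv hab
  have h := integral_exp_neg_mul_mul_eq_of_hasDerivAt (c := c) (g := fun s => deriv v s - c * v s)
    hab.le hv.continuousOn
    (fun x hx => (hv.hasDerivAt_of_mem_Ioo hx).congr_deriv (by ring))
    (hv'_int.sub (hv_int.const_mul c))
  simp only [mul_sub, mul_left_comm _ c] at h
  rw [intervalIntegral.integral_sub (hv'_int.continuousOn_mul hexp)
    ((hv_int.continuousOn_mul hexp).const_mul c), intervalIntegral.integral_const_mul] at h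
  linarith

theorem deriv_add_mul_deriv_sub_eq_of_mem_Ioo {u v : ℝ → ℝ} {Λ c a b : ℝ}
    (hu1 : ContDiffOn ℝ 1 u (Icc a b)) (hu2 : ∀ ξ ∈ Ico a b, DifferentiableAt ℝ (deriv u) ξ)
    (hv1 : ContDiffOn ℝ 1 v (Icc a b)) (hv2 : ∀ ξ ∈ Ico a b, DifferentiableAt ℝ (deriv v) ξ)
    (hode : ∀ ξ ∈ Ioo a b,
      deriv (deriv u) ξ + Λ * deriv (deriv v) ξ = c * (deriv u ξ + deriv v ξ)) :
    ∀ x ∈ Ioo a b, deriv u x + Λ * deriv v x - c * (u x + v x) =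
      deriv u a + Λ * deriv v a - c * (u a + v a) := by
  intro x hx
  have hsub : Icc a x ⊆ Ico a b := fun t ht => ⟨ht.1, ht.2.trans_lt hx.2⟩
  have hcont : ∀ w : ℝ → ℝ, (∀ ξ ∈ Ico a b, DifferentiableAt ℝ (deriv w) ξ) →
      ContinuousOn (deriv w) (Icc a x) := fun w hw t ht =>
    (hw t (hsub ht)).continuousAt.continuousWithinAt
  have hIcc : Icc a x ⊆ Icc a b := Icc_subset_Icc_right hx.2.le
  have hHcont : ContinuousOn (fun t => deriv u t + Λ * deriv v t - c * (u t + v t)) (Icc a x) :=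
    ((hcont u hu2).add (continuousOn_const.mul (hcont v hv2))).sub
      (continuousOn_const.mul ((hu1.continuousOn.mono hIcc).add (hv1.continuousOn.mono hIcc)))
  refine eq_of_hasDerivAt_zero hx.1.le hHcont (fun t ht => ?_)
  have ht' : t ∈ Ioo a b := ⟨ht.1, ht.2.trans hx.2⟩
  have htc : t ∈ Ico a b := Ioo_subset_Ico_self ht'
  exact ((((hu2 t htc).hasDerivAt).add (((hv2 t htc).hasDerivAt).const_mul Λ)).sub
    (((hu1.hasDerivAt_of_mem_Ioo ht').add (hv1.hasDerivAt_of_mem_Ioo ht')).const_mul c)).congr_deriv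
    (by linarith [hode t ht'])

theorem fbp_integral_identities_general (α Λ θ : ℝ)
    (hΛ : 0 < Λ) (c R : ℝ) (u v : ℝ → ℝ)
    (hR : 0 < R)
    (hu1 : ContDiffOn ℝ 1 u (Set.Icc 0 R))
    (hu2 : ∀ ξ ∈ Set.Ico 0 R, DifferentiableAt ℝ (deriv u) ξ)
    (hv1 : ContDiffOn ℝ 1 v (Set.Icc 0 R))
    (hv2 : ∀ ξ ∈ Set.Ico 0 R, DifferentiableAt ℝ (deriv v) ξ)
    (hode_u : ∀ ξ ∈ Set.Ioo 0 R,
      deriv (deriv u) ξ - c * deriv u ξ = -(v ξ ^ α))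
    (hode_v : ∀ ξ ∈ Set.Ioo 0 R,
      Λ * deriv (deriv v) ξ - c * deriv v ξ = v ξ ^ α)
    (hu0 : u 0 = θ) (hu0' : deriv u 0 = c * θ)
    (hv0d : deriv v 0 = -(c / Λ) * (1 - v 0))
    (hvR : v R = 0)
    (huR : u R = 1) :
    θ + Λ * v 0 = 1 - c * (1 - Λ) * ∫ s in (0:ℝ)..R, Real.exp (-(c * s)) * v s ∧
      θ + v 0 = 1 - (1 - Λ) * ∫ s in (0:ℝ)..R, Real.exp (-(c * s)) * deriv v s := by
  have hfirst : ∀ x ∈ Ioo 0 R, deriv u x + Λ * deriv v x = c * (u x + v x - 1) := by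
    intro x hx
    have h := deriv_add_mul_deriv_sub_eq_of_mem_Ioo (Λ := Λ) (c := c) hu1 hu2 hv1 hv2
      (fun ξ hξ => by linear_combination hode_u ξ hξ + hode_v ξ hξ) x hx
    rw [hu0, hu0', hv0d] at h
    field_simp at h
    linear_combination h
  have hI := integral_exp_neg_mul_mul_eq_of_hasDerivAt (F := fun x => u x + Λ * v x - 1)
    (c := c) (g := fun s => c * (1 - Λ) * v s) hR.le
    ((hu1.continuousOn.add (continuousOn_const.mul hv1.continuousOn)).sub continuousOn_const)
    (fun x hx => (((hu1.hasDerivAt_of_mem_Ioo hx).add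
      ((hv1.hasDerivAt_of_mem_Ioo hx).const_mul Λ)).sub_const 1).congr_deriv
        (by linear_combination hfirst x hx))
    ((hv1.continuousOn.intervalIntegrable_of_Icc hR.le).const_mul _)
  simp only [mul_left_comm (exp _), intervalIntegral.integral_const_mul, huR, hvR, hu0,
    mul_zero, neg_zero, exp_zero, one_mul] at hI
  have hparts := integral_exp_neg_mul_mul_deriv (c := c) hR hv1
  simp only [hvR, mul_zero, neg_zero, exp_zero, one_mul] at hparts
  constructor
  · linear_combination hI
  · linear_combination (1 - Λ) * hparts + hI

/-- The integral identities satisfied by a solution `(c, R, u, v)` of the one-phase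
free boundary problem for traveling combustion waves:
`θ + Λ v(0) = 1 − c(1−Λ)∫₀^R e^{−cs} v(s) ds` and
`θ + v(0) = 1 − (1−Λ)∫₀^R e^{−cs} v'(s) ds`. -/
theorem fbp_integral_identities (α Λ θ : ℝ) (hα : α ∈ Set.Ioo (0:ℝ) 1)
    (hΛ : 0 < Λ) (hθ : θ ∈ Set.Ioo (0:ℝ) 1) (c R : ℝ) (u v : ℝ → ℝ)
    (hc : 0 < c) (hR : 0 < R)
    (hu1 : ContDiffOn ℝ 1 u (Set.Icc 0 R))
    (hu2 : ∀ ξ ∈ Set.Ico 0 R, DifferentiableAt ℝ (deriv u) ξ)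
    (hv1 : ContDiffOn ℝ 1 v (Set.Icc 0 R))
    (hv2 : ∀ ξ ∈ Set.Ico 0 R, DifferentiableAt ℝ (deriv v) ξ)
    (hode_u : ∀ ξ ∈ Set.Ioo 0 R,
      deriv (deriv u) ξ - c * deriv u ξ = -(v ξ ^ α))
    (hode_v : ∀ ξ ∈ Set.Ioo 0 R,
      Λ * deriv (deriv v) ξ - c * deriv v ξ = v ξ ^ α)
    (hu0 : u 0 = θ) (hu0' : deriv u 0 = c * θ)
    (hv0 : 0 < v 0) (hv0' : v 0 < 1)
    (hv0d : deriv v 0 = -(c / Λ) * (1 - v 0))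
    (hvR : v R = 0) (hvR' : deriv v R = 0)
    (huR : u R = 1) (huR' : deriv u R = 0) :
    θ + Λ * v 0 = 1 - c * (1 - Λ) * ∫ s in (0:ℝ)..R, Real.exp (-(c * s)) * v s ∧
      θ + v 0 = 1 - (1 - Λ) * ∫ s in (0:ℝ)..R, Real.exp (-(c * s)) * deriv v s :=
  fbp_integral_identities_general α Λ θ hΛ c R u v hR hu1 hu2 hv1 hv2 hode_u hode_v hu0 hu0' hv0d
    hvR huR
end

section
/- Let α ∈ (0,1) and θ ∈ (0,1) be fixed. Then the equation θ = 1 − c·∫₀^{c/(1−α)} e^{−cs}·(1 − s·(1−α)/c)^{1/(1−α)} ds has exactly one solution c in (0, ∞). -/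
/-!
With `β = 1 - α` and `p = 1 / β`, the substitution `s = (c / β) t` turns the right-hand side
into `1 - (c² / β) K_p (c² / β)`, where `K_q λ = ∫₀¹ e^{-λt} (1 - t)^q dt` is
`laplaceOneSubRpow q λ`. Integration by parts gives `λ K_p λ + p K_{p-1} λ = 1`, so the equation
reads `p K_{p-1} (c² / β) = θ`. The left side is continuous and strictly decreasing in `c ≥ 0`,
equals `1` at `c = 0` and is at most `1 / c²`, so it takes the value `θ ∈ (0, 1)` exactly once.
-/

open Set MeasureTheory

lemma hasDerivAt_neg_mul (l t : ℝ) : HasDerivAt (fun t => -(l * t)) (-l) t := by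
  simpa using ((hasDerivAt_id t).const_mul l).fun_neg

noncomputable def laplaceOneSubRpow (q l : ℝ) : ℝ :=
  ∫ t in (0:ℝ)..1, Real.exp (-(l * t)) * (1 - t) ^ q

lemma continuous_exp_mul_one_sub_rpow {q : ℝ} (hq : 0 ≤ q) :
    Continuous fun z : ℝ × ℝ => Real.exp (-(z.1 * z.2)) * (1 - z.2) ^ q := by
  have := Real.continuous_rpow_const hq
  fun_prop

lemma intervalIntegrable_exp_mul_one_sub_rpow {q : ℝ} (hq : 0 ≤ q) (l a b : ℝ) :
    IntervalIntegrable (fun t => Real.exp (-(l * t)) * (1 - t) ^ q) volume a b :=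
  ((continuous_exp_mul_one_sub_rpow hq).comp (Continuous.prodMk_right l)).intervalIntegrable a b

lemma hasDerivAt_exp_mul_one_sub_rpow {p : ℝ} (hp : 1 ≤ p) (l t : ℝ) :
    HasDerivAt (fun t => Real.exp (-(l * t)) * (1 - t) ^ p)
      (-(l * (Real.exp (-(l * t)) * (1 - t) ^ p)
        + p * (Real.exp (-(l * t)) * (1 - t) ^ (p - 1)))) t := by
  have hexp : HasDerivAt (fun t => Real.exp (-(l * t))) (Real.exp (-(l * t)) * -l) t :=
    (hasDerivAt_neg_mul l t).exp
  have hpow : HasDerivAt (fun t : ℝ => (1 - t) ^ p) (p * (1 - t) ^ (p - 1) * -1) t := by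
    simpa using ((hasDerivAt_id t).const_sub 1).rpow_const (p := p) (Or.inr hp)
  exact (hexp.fun_mul hpow).congr_deriv (by ring)

theorem laplaceOneSubRpow_recurrence {p : ℝ} (hp : 1 ≤ p) (l : ℝ) :
    l * laplaceOneSubRpow p l + p * laplaceOneSubRpow (p - 1) l = 1 := by
  have hp0 : 0 ≤ p := by linarith
  have hp1 : 0 ≤ p - 1 := by linarith
  have hint := intervalIntegral.integral_eq_sub_of_hasDerivAt
    (fun t _ => hasDerivAt_exp_mul_one_sub_rpow hp l t)
    ((((intervalIntegrable_exp_mul_one_sub_rpow hp0 l 0 1).const_mul l).add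
      ((intervalIntegrable_exp_mul_one_sub_rpow hp1 l 0 1).const_mul p)).neg)
  rw [intervalIntegral.integral_neg, intervalIntegral.integral_add
    ((intervalIntegrable_exp_mul_one_sub_rpow hp0 l 0 1).const_mul l)
    ((intervalIntegrable_exp_mul_one_sub_rpow hp1 l 0 1).const_mul p),
    intervalIntegral.integral_const_mul, intervalIntegral.integral_const_mul] at hint
  simp only [sub_self, Real.zero_rpow (by positivity : p ≠ 0), mul_zero, sub_zero,
    Real.one_rpow, mul_one, neg_zero, Real.exp_zero, zero_sub] at hint
  unfold laplaceOneSubRpow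
  linarith

theorem laplaceOneSubRpow_zero {q : ℝ} (hq : 0 ≤ q) : laplaceOneSubRpow q 0 = 1 / (q + 1) := by
  have h := laplaceOneSubRpow_recurrence (p := q + 1) (by linarith) 0
  rw [add_sub_cancel_right, zero_mul, zero_add] at h
  field_simp
  linarith

theorem laplaceOneSubRpow_strictAnti {q : ℝ} (hq : 0 ≤ q) : StrictAnti (laplaceOneSubRpow q) := by
  intro l₁ l₂ hl
  have hcont (l : ℝ) : ContinuousOn (fun t => Real.exp (-(l * t)) * (1 - t) ^ q) (Icc 0 1) :=
    ((continuous_exp_mul_one_sub_rpow hq).comp (Continuous.prodMk_right l)).continuousOn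
  refine intervalIntegral.integral_lt_integral_of_continuousOn_of_le_of_exists_lt one_pos
    (hcont l₂) (hcont l₁) (fun t ht => ?_) ⟨1 / 2, by norm_num, ?_⟩
  · gcongr
    · exact Real.rpow_nonneg (by linarith [ht.2]) q
    · exact ht.1.le
  · gcongr

theorem continuous_laplaceOneSubRpow {q : ℝ} (hq : 0 ≤ q) : Continuous (laplaceOneSubRpow q) :=
  intervalIntegral.continuous_parametric_intervalIntegral_of_continuous'
    (continuous_exp_mul_one_sub_rpow hq) 0 1

theorem integral_exp_neg_mul {l : ℝ} (hl : l ≠ 0) :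
    ∫ t in (0:ℝ)..1, Real.exp (-(l * t)) = (1 - Real.exp (-l)) / l := by
  have hd (t : ℝ) : HasDerivAt (fun t => -Real.exp (-(l * t)) / l) (Real.exp (-(l * t))) t :=
    ((hasDerivAt_neg_mul l t).exp.fun_neg.div_const l).congr_deriv (by field_simp)
  rw [intervalIntegral.integral_eq_sub_of_hasDerivAt (fun t _ => hd t)
    ((by fun_prop : Continuous fun t => Real.exp (-(l * t))).intervalIntegrable 0 1)]
  simp only [mul_one, mul_zero, neg_zero, Real.exp_zero]
  ring

theorem laplaceOneSubRpow_le_inv {q : ℝ} (hq : 0 ≤ q) {l : ℝ} (hl : 0 < l) :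
    laplaceOneSubRpow q l ≤ 1 / l := by
  calc laplaceOneSubRpow q l ≤ ∫ t in (0:ℝ)..1, Real.exp (-(l * t)) := by
        refine intervalIntegral.integral_mono_on zero_le_one
          (intervalIntegrable_exp_mul_one_sub_rpow hq l 0 1)
          ((by fun_prop : Continuous fun t => Real.exp (-(l * t))).intervalIntegrable 0 1)
          fun t ht => mul_le_of_le_one_right (Real.exp_pos _).le ?_
        exact Real.rpow_le_one (by linarith [ht.2]) (by linarith [ht.1]) hq
    _ = (1 - Real.exp (-l)) / l := integral_exp_neg_mul hl.ne'
    _ ≤ 1 / l := by gcongr; linarith [Real.exp_pos (-l)]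

theorem integral_exp_mul_one_sub_rpow_eq {c β : ℝ} (hc : c ≠ 0) (hβ : β ≠ 0) (p : ℝ) :
    ∫ s in (0:ℝ)..(c / β), Real.exp (-(c * s)) * (1 - s * β / c) ^ p
      = c / β * laplaceOneSubRpow p (c ^ 2 / β) := by
  have h := intervalIntegral.smul_integral_comp_mul_right (a := 0) (b := 1)
    (fun s => Real.exp (-(c * s)) * (1 - s * β / c) ^ p) (c / β)
  rw [zero_mul, one_mul] at h
  rw [laplaceOneSubRpow, ← h, smul_eq_mul]
  congr 2 with t
  rw [show c * (t * (c / β)) = c ^ 2 / β * t by ring, show t * (c / β) * β / c = t by field_simp]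

theorem one_sub_mul_integral_exp_mul_one_sub_rpow {c β p : ℝ} (hc : c ≠ 0) (hβ : β ≠ 0)
    (hp : 1 ≤ p) :
    1 - c * ∫ s in (0:ℝ)..(c / β), Real.exp (-(c * s)) * (1 - s * β / c) ^ p
      = p * laplaceOneSubRpow (p - 1) (c ^ 2 / β) := by
  rw [integral_exp_mul_one_sub_rpow_eq hc hβ]
  linear_combination -laplaceOneSubRpow_recurrence hp (c ^ 2 / β)

theorem existsUnique_pos_eq_of_strictAntiOn {f : ℝ → ℝ} (hf : Continuous f)
    (hanti : StrictAntiOn f (Ici 0)) {θ x : ℝ} (hx : 0 ≤ x) (hfx : f x < θ) (hf0 : θ < f 0) :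
    ∃! c, 0 < c ∧ f c = θ := by
  obtain ⟨c, hc, hfc⟩ := intermediate_value_Ioo' hx hf.continuousOn ⟨hfx, hf0⟩
  refine ⟨c, ⟨hc.1, hfc⟩, fun c' ⟨hc', hfc'⟩ => ?_⟩
  exact hanti.injOn hc'.le hc.1.le (hfc'.trans hfc.symm)

/-- In the limit case `Λ = 0` (infinite Lewis number), the transcendental equation
`θ = 1 − c ∫₀^{c/(1−α)} e^{−cs} (1 − s(1−α)/c)^{1/(1−α)} ds` has exactly one
positive root `c`. -/
theorem unique_speed_infinite_Lewis (α θ : ℝ) (hα : α ∈ Set.Ioo (0:ℝ) 1)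
    (hθ : θ ∈ Set.Ioo (0:ℝ) 1) :
    ∃! c : ℝ, 0 < c ∧
      θ = 1 - c * ∫ s in (0:ℝ)..(c / (1 - α)),
            Real.exp (-(c * s)) * (1 - s * (1 - α) / c) ^ ((1:ℝ) / (1 - α)) := by
  set β := 1 - α
  set p := 1 / β
  have hβ : 0 < β := by linarith [hα.2]
  have hp : 1 ≤ p := one_le_one_div hβ (by linarith [hα.1])
  have hq : 0 ≤ p - 1 := by linarith
  set Φ := fun c : ℝ => p * laplaceOneSubRpow (p - 1) (c ^ 2 / β)
  have hΦ_cont : Continuous Φ := by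
    have := continuous_laplaceOneSubRpow hq
    fun_prop
  have hΦ_anti : StrictAntiOn Φ (Ici 0) := fun a ha b hb hab =>
    mul_lt_mul_of_pos_left (laplaceOneSubRpow_strictAnti hq (by gcongr)) (by positivity)
  have hΦ_zero : Φ 0 = 1 := by
    simp only [Φ, zero_pow two_ne_zero, zero_div, laplaceOneSubRpow_zero hq, sub_add_cancel]
    exact mul_one_div_cancel (by positivity)
  have hΦ_lt : Φ θ⁻¹ < θ := calc
    Φ θ⁻¹ ≤ p * (1 / (θ⁻¹ ^ 2 / β)) :=
      have := hθ.1
      mul_le_mul_of_nonneg_left (laplaceOneSubRpow_le_inv hq (by positivity)) (by positivity)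
    _ = θ ^ 2 := by simp only [p]; field_simp
    _ < θ := by nlinarith [hθ.1, hθ.2]
  have hreduce (c : ℝ) (hc : 0 < c) : 1 - c * ∫ s in (0:ℝ)..(c / β),
      Real.exp (-(c * s)) * (1 - s * β / c) ^ p = Φ c :=
    one_sub_mul_integral_exp_mul_one_sub_rpow hc.ne' hβ.ne' hp
  obtain ⟨c, ⟨hc, hΦc⟩, huniq⟩ := existsUnique_pos_eq_of_strictAntiOn hΦ_cont hΦ_anti
    (inv_nonneg.2 hθ.1.le) hΦ_lt (hΦ_zero ▸ hθ.2)
  refine ⟨c, ⟨hc, by rw [hreduce c hc, hΦc]⟩, fun c' ⟨hc', hθc'⟩ => huniq c' ⟨hc', ?_⟩⟩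
  rw [hθc', hreduce c' hc']
end
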